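/- arXiv:math/0609125 — 5 statements merged into one kernel-verified Lean document; each statement's English description precedes it below -/
import Mathlib

section
/- Let A be a magmatic algebra over a field K with a coassociative reduced unital-infinitesimal coproduct δ. For primitive elements x₁, …, xₙ of A and any 1 ≤ k ≤ n−1: δᵏ(ρⁿ(x₁,…,xₙ)) = Σ_{1 ≤ i₁ < i₂ < … < i_k ≤ n−1} ρ^{i₁}(x₁,…,x_{i₁}) ⊗ ρ^{i₂−i₁}(x_{i₁+1},…,x_{i₂}) ⊗ … ⊗ ρ^{n−i_k}(x_{i_k+1},…,xₙ) in A^{⊗(k+1)}; moreover δᵏ(ρⁿ(x₁,…,xₙ)) = 0 for k ≥ n. -/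
open TensorProduct

universe u v

/-- A K-linear map `δ : A → A ⊗ A` satisfies the reduced unital-infinitesimal
compatibility relation if
`δ(a·b) = (id ⊗ mulRight b)(δ a) + (mulLeft a ⊗ id)(δ b) + a ⊗ b` for all `a b`. -/
def IsUICoproduct (K : Type u) [Field K] (A : Type v) [NonUnitalNonAssocRing A]
    [Module K A] [SMulCommClass K A A] [IsScalarTower K A A]
    (δ : A →ₗ[K] A ⊗[K] A) : Prop :=
  ∀ a b : A,
    δ (a * b) =
      TensorProduct.map LinearMap.id (LinearMap.mulRight K b) (δ a) +
      TensorProduct.map (LinearMap.mulLeft K a) LinearMap.id (δ b) +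
      a ⊗ₜ[K] b

/-- `δ` is coassociative: `(δ ⊗ id) ∘ δ = (id ⊗ δ) ∘ δ` up to the associator. -/
def IsCoassoc (K : Type u) [Field K] (A : Type v) [AddCommGroup A]
    [Module K A] (δ : A →ₗ[K] A ⊗[K] A) : Prop :=
  ∀ a : A,
    (TensorProduct.assoc K A A A) (TensorProduct.map δ LinearMap.id (δ a)) =
      TensorProduct.map LinearMap.id δ (δ a)

/-- The left comb `ωⁿ(x₁,…,xₙ) = ((x₁·x₂)·x₃)⋯·xₙ`, given on the (nonempty) list
of its arguments (junk value `0` on the empty list). -/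
def leftComb {A : Type*} [Mul A] [Zero A] : List A → A
  | [] => 0
  | x :: xs => xs.foldl (· * ·) x

/-- The right comb `ρⁿ(x₁,…,xₙ) = x₁·(x₂·( ⋯ ·xₙ))`, given on the (nonempty) list
of its arguments (junk value `0` on the empty list). -/
def rightComb {A : Type*} [Mul A] [Zero A] : List A → A
  | [] => 0
  | [x] => x
  | x :: y :: ys => x * rightComb (y :: ys)

/-- A bundled `K`-module, used to define iterated tensor powers by recursion. -/
structure BundledModule (K : Type u) [Field K] where
  carrier : Type v
  [acg : AddCommGroup carrier]
  [mod : Module K carrier]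

attribute [instance] BundledModule.acg BundledModule.mod

variable (K : Type u) [Field K] (A : Type v) [NonUnitalNonAssocRing A]
  [Module K A] [SMulCommClass K A A] [IsScalarTower K A A]

/-- Data of the right-nested tensor powers `Tpow n = A^{⊗(n+1)}`. -/
noncomputable def TpowData : ℕ → BundledModule K
  | 0 => ⟨A⟩
  | n + 1 => ⟨TensorProduct K A (TpowData n).carrier⟩

/-- The right-nested tensor power `Tpow K A n = A^{⊗(n+1)}`:
`Tpow 0 = A` and `Tpow (n+1) = A ⊗ Tpow n`. -/
noncomputable def Tpow (n : ℕ) : Type v := (TpowData K A n).carrier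

noncomputable instance (n : ℕ) : AddCommGroup (Tpow K A n) := (TpowData K A n).acg
noncomputable instance (n : ℕ) : Module K (Tpow K A n) := (TpowData K A n).mod

/-- The iterated coproduct `δⁿ : A → A^{⊗(n+1)}`, with `δ⁰ = id`, `δ¹ = δ` and
`δⁿ = (δ ⊗ id^{⊗(n-1)}) ∘ δ^{n-1}` (composed with the associator identification). -/
noncomputable def deltaIter (δ : A →ₗ[K] A ⊗[K] A) : (n : ℕ) → A →ₗ[K] Tpow K A n
  | 0 => LinearMap.id
  | 1 => δ
  | n + 2 =>
    (TensorProduct.assoc K A A (Tpow K A n)).toLinearMap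
      ∘ₗ (TensorProduct.map δ LinearMap.id :
            A ⊗[K] Tpow K A n →ₗ[K] (A ⊗[K] A) ⊗[K] Tpow K A n)
      ∘ₗ deltaIter δ (n + 1)

/-- The linear map `A^{⊗(n+1)} → A` induced by the left comb `ω^{n+1}`. -/
noncomputable def leftCombMap : (n : ℕ) → Tpow K A n →ₗ[K] A
  | 0 => LinearMap.id
  | 1 => TensorProduct.lift (LinearMap.mul K A)
  | n + 2 =>
    leftCombMap (n + 1)
      ∘ₗ (TensorProduct.map (TensorProduct.lift (LinearMap.mul K A)) LinearMap.id :
            (A ⊗[K] A) ⊗[K] Tpow K A n →ₗ[K] A ⊗[K] Tpow K A n)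
      ∘ₗ (TensorProduct.assoc K A A (Tpow K A n)).symm.toLinearMap

/-- The linear map `A^{⊗(n+1)} → A` induced by the right comb `ρ^{n+1}`. -/
noncomputable def rightCombMap : (n : ℕ) → Tpow K A n →ₗ[K] A
  | 0 => LinearMap.id
  | n + 1 =>
    TensorProduct.lift (LinearMap.mul K A)
      ∘ₗ (TensorProduct.map LinearMap.id (rightCombMap n) :
            A ⊗[K] Tpow K A n →ₗ[K] A ⊗[K] A)

/-- Given cut points `c 0 < c 1 < … < c (k-1)` (1-based positions in the list `l`),
the element `ρ^{c 0}(x₁,…) ⊗ ρ^{c 1 - c 0}(…) ⊗ ⋯ ⊗ ρ^{n - c (k-1)}(…)` of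
`A^{⊗(k+1)}` obtained by cutting `l` at those points and taking right combs of the
segments. -/
noncomputable def segTensor : (k : ℕ) → (Fin k → ℕ) → List A → Tpow K A k
  | 0, _, l => (rightComb l : A)
  | k + 1, c, l =>
    ((rightComb (l.take (c 0)) ⊗ₜ[K]
        segTensor k (fun j => c j.succ - c 0) (l.drop (c 0))) : A ⊗[K] Tpow K A k)

set_option linter.unusedSectionVars false

theorem rightComb_cons' {B : Type*} [Mul B] [Zero B] (x : B) (l : List B) (hl : l ≠ []) :
    rightComb (x :: l) = x * rightComb l := by
  cases l with
  | nil => exact absurd rfl hl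
  | cons y ys => rfl

theorem delta_rightComb (δ : A →ₗ[K] A ⊗[K] A) (hui : IsUICoproduct K A δ)
    (l : List A) (hl : l ≠ []) (hprim : ∀ x ∈ l, δ x = 0) :
    δ (rightComb l) = ∑ j ∈ Finset.Icc 1 (l.length - 1),
      rightComb (l.take j) ⊗ₜ[K] rightComb (l.drop j) := by
  induction l with
  | nil => exact absurd rfl hl
  | cons x xs ih =>
    cases xs with
    | nil =>
      show δ x = _
      rw [hprim x (by simp)]
      simp
    | cons y ys =>
      rw [rightComb_cons' x (y::ys) (by simp), hui x (rightComb (y::ys)),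
        hprim x (by simp), map_zero,
        ih (by simp) (fun z hz => hprim z (List.mem_cons_of_mem x hz)), map_sum]
      set m : ℕ := ys.length + 1 with hm
      have hlen : (y :: ys).length = m := by simp [hm]
      have hlen2 : (x :: y :: ys).length = m + 1 := by simp [hm]
      rw [hlen, hlen2]
      have hterm : ∀ j ∈ Finset.Icc 1 (m - 1),
          (TensorProduct.map (LinearMap.mulLeft K x) LinearMap.id)
            (rightComb ((y::ys).take j) ⊗ₜ[K] rightComb ((y::ys).drop j))
          = rightComb ((x::y::ys).take (j+1)) ⊗ₜ[K] rightComb ((x::y::ys).drop (j+1)) := by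
        intro j hj
        have hj1 : 1 ≤ j := (Finset.mem_Icc.mp hj).1
        obtain ⟨j', rfl⟩ : ∃ j', j = j' + 1 := ⟨j - 1, by omega⟩
        rw [TensorProduct.map_tmul]
        simp only [LinearMap.mulLeft_apply, LinearMap.id_coe, id_eq,
          List.take_succ_cons, List.drop_succ_cons]
        rw [rightComb_cons' x (y :: List.take j' ys) (by simp)]
      rw [Finset.sum_congr rfl hterm]
      have hre : ∑ j ∈ Finset.Icc 1 (m - 1),
          rightComb ((x::y::ys).take (j+1)) ⊗ₜ[K] rightComb ((x::y::ys).drop (j+1))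
          = ∑ j ∈ Finset.Icc 2 m,
              rightComb ((x::y::ys).take j) ⊗ₜ[K] rightComb ((x::y::ys).drop j) := by
        have hmap : Finset.Icc 2 m = Finset.map (addRightEmbedding 1) (Finset.Icc 1 (m-1)) := by
          rw [Finset.map_add_right_Icc]
          congr 1 <;> omega
        rw [hmap, Finset.sum_map]
        rfl
      rw [hre]
      have hsplit : Finset.Icc 1 (m + 1 - 1) = insert 1 (Finset.Icc 2 m) := by
        ext a
        simp only [Finset.mem_Icc, Finset.mem_insert]
        omega
      rw [hsplit, Finset.sum_insert (by simp), zero_add, add_comm]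
      congr 1

theorem segTensor_eq_tmul (k : ℕ) (c : Fin (k+1) → ℕ) (l : List A) :
    segTensor K A (k+1) c l = ((rightComb (l.take (c 0)) ⊗ₜ[K]
      segTensor K A k (fun j => c j.succ - c 0) (l.drop (c 0))) : A ⊗[K] Tpow K A k) := rfl

theorem segTensor_shift (k : ℕ) (c : Fin (k+1) → ℕ) (j : ℕ) (l : List A)
    (h0 : j ≤ c 0) (hmono : ∀ i : Fin k, c 0 ≤ c i.succ) :
    segTensor K A (k+1) (fun i => c i - j) (l.drop j)
      = ((rightComb ((l.drop j).take (c 0 - j)) ⊗ₜ[K]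
          segTensor K A k (fun i => c i.succ - c 0) (l.drop (c 0))) : A ⊗[K] Tpow K A k) := by
  rw [segTensor_eq_tmul]
  congr 1
  have h1 : (fun i : Fin k => (c i.succ - j) - (c 0 - j)) = fun i => c i.succ - c 0 := by
    funext i; have := hmono i; omega
  rw [List.drop_drop]
  have h2 : j + (c 0 - j) = c 0 := by omega
  rw [h2, h1]

theorem strictMono_fin_cases {k : ℕ} (j : ℕ) (f : Fin k → ℕ) (hf : StrictMono f)
    (hj : ∀ i, j < f i) : StrictMono (Fin.cases j f : Fin (k+1) → ℕ) := by
  intro a b hab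
  induction b using Fin.cases with
  | zero => exact absurd hab (by simp [Fin.lt_iff_val_lt_val])
  | succ b' =>
    induction a using Fin.cases with
    | zero => simpa using hj b'
    | succ a' =>
      simp only [Fin.cases_succ]
      exact hf (by simpa [Fin.succ_lt_succ_iff] using hab)

theorem orderEmbOfFin_insert_min {s : Finset ℕ} {k : ℕ} (hs : s.card = k) (j : ℕ)
    (hj : ∀ x ∈ s, j < x) (hcard : (insert j s).card = k + 1) :
    ∀ i : Fin (k+1), (insert j s).orderEmbOfFin hcard i
      = Fin.cases j (fun i => s.orderEmbOfFin hs i) i := by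
  have h := Finset.orderEmbOfFin_unique hcard
      (f := (Fin.cases j (fun i => s.orderEmbOfFin hs i) : Fin (k+1) → ℕ)) ?_ ?_
  · intro i; exact (congrFun h i).symm
  · intro x
    induction x using Fin.cases with
    | zero => simp
    | succ x' => simp [Finset.mem_insert, Finset.orderEmbOfFin_mem]
  · exact strictMono_fin_cases j _ (s.orderEmbOfFin hs).strictMono
      (fun i => hj _ (Finset.orderEmbOfFin_mem s hs i))

theorem orderEmbOfFin_zero' {s : Finset ℕ} {k : ℕ} (h : s.card = k + 1) :
    s.orderEmbOfFin h 0 = s.min' (Finset.card_pos.mp (by omega)) := by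
  rw [show (0 : Fin (k+1)) = ⟨0, Nat.succ_pos k⟩ from rfl]
  exact Finset.orderEmbOfFin_zero h (Nat.succ_pos k)

theorem step_term (δ : A →ₗ[K] A ⊗[K] A) (hui : IsUICoproduct K A δ)
    (l : List A) (hprim : ∀ x ∈ l, δ x = 0) (m : ℕ) (c : Fin (m+1) → ℕ)
    (hmono : StrictMono c) (hc1 : 1 ≤ c 0) (hcn : c 0 ≤ l.length) :
    (TensorProduct.assoc K A A (Tpow K A m)).toLinearMap
      ((TensorProduct.map δ LinearMap.id) (segTensor K A (m+1) c l))
      = ∑ j ∈ Finset.Icc 1 (c 0 - 1), segTensor K A (m+2) (Fin.cases j c) l := by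
  rw [segTensor_eq_tmul, TensorProduct.map_tmul]
  have hlen : (l.take (c 0)).length = c 0 := by
    rw [List.length_take]; omega
  rw [delta_rightComb K A δ hui (l.take (c 0))
    (by intro h; rw [h] at hlen; simp at hlen; omega)
    (fun z hz => hprim z (List.take_subset _ _ hz)), hlen]
  rw [TensorProduct.sum_tmul, map_sum]
  refine Finset.sum_congr rfl (fun j hj => ?_)
  have hj' : 1 ≤ j ∧ j ≤ c 0 - 1 := Finset.mem_Icc.mp hj
  simp only [LinearMap.id_coe, id_eq, LinearEquiv.coe_coe]
  rw [show (⇑(TensorProduct.assoc K A A (Tpow K A m)) = ⇑((TensorProduct.assoc K A A (Tpow K A m)).toLinearMap)) from rfl]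
  simp only [LinearEquiv.coe_coe, TensorProduct.assoc_tmul]
  have htake : List.take j (List.take (c 0) l) = List.take j l := by
    rw [List.take_take]; congr 1; omega
  have hdrop : List.drop j (List.take (c 0) l) = List.take (c 0 - j) (List.drop j l) :=
    List.drop_take
  rw [htake, hdrop]
  rw [← segTensor_shift K A m c j l (by omega)
    (fun i => le_of_lt (hmono (Fin.succ_pos i)))]
  have hrhs : segTensor K A (m+2) (fun i => Fin.cases j c i) l
      = rightComb (List.take j l) ⊗ₜ[K]
          segTensor K A (m+1) (fun i : Fin (m+1) => c i - j) (List.drop j l) := by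
    rw [segTensor_eq_tmul]
    simp only [Fin.cases_zero, Fin.cases_succ]
    rfl
  rw [hrhs]
  rfl

theorem insert_facts {N m : ℕ} {s : Finset ℕ} (hsub : s ⊆ Finset.Icc 1 N)
    (hcard : s.card = m + 1) {j : ℕ} (hj1 : 1 ≤ j)
    (hj2 : j ≤ s.orderEmbOfFin hcard 0 - 1) :
    (∀ x ∈ s, j < x) ∧ j ∉ s ∧
      insert j s ∈ (Finset.Icc 1 N).powersetCard (m + 2) := by
  have hne : s.Nonempty := Finset.card_pos.mp (by omega)
  have hc0 : s.orderEmbOfFin hcard 0 = s.min' hne := orderEmbOfFin_zero' hcard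
  have hc0mem : s.min' hne ∈ Finset.Icc 1 N := hsub (s.min'_mem hne)
  rw [Finset.mem_Icc] at hc0mem
  have hlt : ∀ x ∈ s, j < x := by
    intro x hx
    have := Finset.min'_le s x hx
    omega
  have hnotmem : j ∉ s := fun h => lt_irrefl j (hlt j h)
  refine ⟨hlt, hnotmem, Finset.mem_powersetCard.mpr ⟨?_, ?_⟩⟩
  · rw [Finset.insert_subset_iff]
    exact ⟨Finset.mem_Icc.mpr ⟨hj1, by omega⟩, hsub⟩
  · rw [Finset.card_insert_of_notMem hnotmem, hcard]

theorem erase_facts {N m : ℕ} {t : Finset ℕ} (hsub : t ⊆ Finset.Icc 1 N)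
    (hcard : t.card = m + 2) :
    t.erase (t.orderEmbOfFin hcard 0) ∈ (Finset.Icc 1 N).powersetCard (m + 1) ∧
    ∀ h' : (t.erase (t.orderEmbOfFin hcard 0)).card = m + 1,
      1 ≤ t.orderEmbOfFin hcard 0 ∧
      t.orderEmbOfFin hcard 0
        ≤ (t.erase (t.orderEmbOfFin hcard 0)).orderEmbOfFin h' 0 - 1 := by
  have hmem : t.orderEmbOfFin hcard 0 ∈ t := Finset.orderEmbOfFin_mem t hcard 0
  have hcarde : (t.erase (t.orderEmbOfFin hcard 0)).card = m + 1 := by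
    rw [Finset.card_erase_of_mem hmem, hcard]; omega
  refine ⟨Finset.mem_powersetCard.mpr ⟨(Finset.erase_subset _ _).trans hsub, hcarde⟩,
    fun h' => ?_⟩
  have hne : t.Nonempty := ⟨_, hmem⟩
  have hene : (t.erase (t.orderEmbOfFin hcard 0)).Nonempty := Finset.card_pos.mp (by omega)
  have h0t : t.orderEmbOfFin hcard 0 = t.min' hne := orderEmbOfFin_zero' hcard
  have h0e : (t.erase (t.orderEmbOfFin hcard 0)).orderEmbOfFin h' 0
      = (t.erase (t.orderEmbOfFin hcard 0)).min' hene := orderEmbOfFin_zero' h'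
  have hmin_mem := (t.erase (t.orderEmbOfFin hcard 0)).min'_mem hene
  have h1 : (t.erase (t.orderEmbOfFin hcard 0)).min' hene ∈ t :=
    Finset.mem_of_mem_erase hmin_mem
  have h2 : (t.erase (t.orderEmbOfFin hcard 0)).min' hene ≠ t.orderEmbOfFin hcard 0 :=
    Finset.ne_of_mem_erase hmin_mem
  have h3 : t.min' hne ≤ (t.erase (t.orderEmbOfFin hcard 0)).min' hene :=
    Finset.min'_le t _ h1
  have h4 : t.orderEmbOfFin hcard 0 ∈ Finset.Icc 1 N := hsub hmem
  rw [Finset.mem_Icc] at h4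
  exact ⟨h4.1, by omega⟩

theorem main_formula (δ : A →ₗ[K] A ⊗[K] A) (hui : IsUICoproduct K A δ)
    (n : ℕ) (hn : 1 ≤ n) (l : List A) (hl : l.length = n)
    (hprim : ∀ x ∈ l, δ x = 0) :
    ∀ k, k ≤ n - 1 →
      deltaIter K A δ k (rightComb l) =
        ∑ s ∈ ((Finset.Icc 1 (n - 1)).powersetCard k).attach,
          segTensor K A k
            (fun j => (s.1.orderIsoOfFin ((Finset.mem_powersetCard.mp s.2).2) j : ℕ)) l := by
  have hlnil : l ≠ [] := by
    intro h; rw [h] at hl; simp at hl; omega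
  intro k
  induction k with
  | zero =>
    intro _
    show rightComb l = _
    have hconst : ∑ s ∈ ((Finset.Icc 1 (n - 1)).powersetCard 0).attach,
        segTensor K A 0
          (fun j => (s.1.orderIsoOfFin ((Finset.mem_powersetCard.mp s.2).2) j : ℕ)) l
        = ∑ _s ∈ ((Finset.Icc 1 (n - 1)).powersetCard 0).attach, rightComb l :=
      Finset.sum_congr rfl (fun _ _ => rfl)
    rw [hconst, Finset.sum_const, Finset.card_attach, Finset.card_powersetCard]
    simp
  | succ k ih =>
    intro hk1
    cases k with
    | zero =>
      -- k = 1 : base case via delta_rightComb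
      show δ (rightComb l) = _
      rw [delta_rightComb K A δ hui l hlnil hprim, hl]
      refine Finset.sum_bij'
        (i := fun j hj => (⟨{j}, Finset.mem_powersetCard.mpr
          ⟨Finset.singleton_subset_iff.mpr hj, Finset.card_singleton j⟩⟩ :
            {x // x ∈ (Finset.Icc 1 (n - 1)).powersetCard 1}))
        (j := fun s _ => s.1.orderEmbOfFin ((Finset.mem_powersetCard.mp s.2).2) 0)
        (fun j hj => Finset.mem_attach _ _)
        (fun s _ => (Finset.mem_powersetCard.mp s.2).1 (Finset.orderEmbOfFin_mem _ _ _))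
        (fun j hj => Finset.orderEmbOfFin_singleton j 0)
        (fun s _ => ?_) (fun j hj => ?_)
      · -- right inverse
        have hm := Finset.orderEmbOfFin_mem s.1 ((Finset.mem_powersetCard.mp s.2).2) 0
        refine Subtype.ext (Eq.symm (Finset.eq_singleton_iff_unique_mem.mpr
          ⟨hm, fun x hx => ?_⟩))
        exact Finset.card_le_one.mp (le_of_eq (Finset.mem_powersetCard.mp s.2).2) x hx _ hm
      · -- values agree
        have hc0 : (({j} : Finset ℕ).orderEmbOfFin (Finset.card_singleton j) (0 : Fin 1) : ℕ)
            = j := Finset.orderEmbOfFin_singleton j 0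
        show rightComb (l.take j) ⊗ₜ[K] rightComb (l.drop j)
          = (rightComb (l.take (({j} : Finset ℕ).orderEmbOfFin (Finset.card_singleton j) 0))
              ⊗ₜ[K] rightComb
                (l.drop (({j} : Finset ℕ).orderEmbOfFin (Finset.card_singleton j) 0)) :
              A ⊗[K] A)
        rw [hc0]
    | succ m =>
      -- step case
      have hdef : deltaIter K A δ (m + 2) (rightComb l)
          = (TensorProduct.assoc K A A (Tpow K A m)).toLinearMap
              ((TensorProduct.map δ LinearMap.id)
                (deltaIter K A δ (m + 1) (rightComb l))) := rfl
      erw [hdef, ih (by omega), map_sum, map_sum]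
      have hstep : ∀ s : {x // x ∈ (Finset.Icc 1 (n - 1)).powersetCard (m + 1)},
          (TensorProduct.assoc K A A (Tpow K A m)).toLinearMap
            ((TensorProduct.map δ LinearMap.id) (segTensor K A (m + 1)
              (fun j => (s.1.orderIsoOfFin ((Finset.mem_powersetCard.mp s.2).2) j : ℕ)) l))
          = ∑ j ∈ Finset.Icc 1
                (s.1.orderEmbOfFin ((Finset.mem_powersetCard.mp s.2).2) 0 - 1),
              segTensor K A (m + 2)
                (Fin.cases j
                  (fun i => s.1.orderEmbOfFin ((Finset.mem_powersetCard.mp s.2).2) i)) l := by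
        intro s
        have hsub := (Finset.mem_powersetCard.mp s.2).1
        have hc0 : s.1.orderEmbOfFin ((Finset.mem_powersetCard.mp s.2).2) 0 ∈
            Finset.Icc 1 (n - 1) := hsub (Finset.orderEmbOfFin_mem _ _ _)
        rw [Finset.mem_Icc] at hc0
        exact step_term K A δ hui l hprim m
          (fun i => s.1.orderEmbOfFin ((Finset.mem_powersetCard.mp s.2).2) i)
          (s.1.orderEmbOfFin ((Finset.mem_powersetCard.mp s.2).2)).strictMono
          hc0.1 (by rw [hl]; show s.1.orderEmbOfFin ((Finset.mem_powersetCard.mp s.2).2) 0 ≤ n; omega)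
      simp only [hstep]
      erw [Finset.sum_sigma']
      refine Finset.sum_bij'
        (i := fun p hp => (⟨insert p.2 p.1.1, (insert_facts
            (Finset.mem_powersetCard.mp p.1.2).1 (Finset.mem_powersetCard.mp p.1.2).2
            (Finset.mem_Icc.mp (Finset.mem_sigma.mp hp).2).1
            (Finset.mem_Icc.mp (Finset.mem_sigma.mp hp).2).2).2.2⟩ :
          {x // x ∈ (Finset.Icc 1 (n - 1)).powersetCard (m + 2)}))
        (j := fun t ht => ⟨⟨t.1.erase (t.1.orderEmbOfFin ((Finset.mem_powersetCard.mp t.2).2) 0),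
            (erase_facts (Finset.mem_powersetCard.mp t.2).1
              (Finset.mem_powersetCard.mp t.2).2).1⟩,
          t.1.orderEmbOfFin ((Finset.mem_powersetCard.mp t.2).2) 0⟩)
        (fun p hp => Finset.mem_attach _ _)
        (fun t ht => ?_) (fun p hp => ?_) (fun t ht => ?_) (fun p hp => ?_)
      · -- inverse lands in sigma set
        rw [Finset.mem_sigma]
        refine ⟨Finset.mem_attach _ _, Finset.mem_Icc.mpr ?_⟩
        exact ((erase_facts (Finset.mem_powersetCard.mp t.2).1
          (Finset.mem_powersetCard.mp t.2).2).2
            ((Finset.mem_powersetCard.mp ((erase_facts (Finset.mem_powersetCard.mp t.2).1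
              (Finset.mem_powersetCard.mp t.2).2).1)).2))
      · -- left inverse
        obtain ⟨hlt, hnot, hmem2⟩ := insert_facts
          (Finset.mem_powersetCard.mp p.1.2).1 (Finset.mem_powersetCard.mp p.1.2).2
          (Finset.mem_Icc.mp (Finset.mem_sigma.mp hp).2).1
          (Finset.mem_Icc.mp (Finset.mem_sigma.mp hp).2).2
        have hins0 : (insert p.2 p.1.1).orderEmbOfFin
            ((Finset.mem_powersetCard.mp hmem2).2) 0 = p.2 := by
          rw [orderEmbOfFin_insert_min (Finset.mem_powersetCard.mp p.1.2).2 p.2 hlt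
            ((Finset.mem_powersetCard.mp hmem2).2) 0]
          simp
        refine Sigma.ext (Subtype.ext ?_) (heq_of_eq ?_)
        · show (insert p.2 p.1.1).erase ((insert p.2 p.1.1).orderEmbOfFin _ 0) = p.1.1
          rw [hins0, Finset.erase_insert hnot]
        · show (insert p.2 p.1.1).orderEmbOfFin _ 0 = p.2
          rw [hins0]
      · -- right inverse
        exact Subtype.ext (Finset.insert_erase (Finset.orderEmbOfFin_mem _ _ _))
      · -- values agree
        obtain ⟨hlt, hnot, hmem2⟩ := insert_facts
          (Finset.mem_powersetCard.mp p.1.2).1 (Finset.mem_powersetCard.mp p.1.2).2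
          (Finset.mem_Icc.mp (Finset.mem_sigma.mp hp).2).1
          (Finset.mem_Icc.mp (Finset.mem_sigma.mp hp).2).2
        exact congrArg (fun c => segTensor K A (m + 2) c l)
          (funext fun i => (orderEmbOfFin_insert_min
            (Finset.mem_powersetCard.mp p.1.2).2 p.2 hlt
            ((Finset.mem_powersetCard.mp hmem2).2) i).symm)

theorem zero_formula (δ : A →ₗ[K] A ⊗[K] A) (hui : IsUICoproduct K A δ)
    (n : ℕ) (hn : 1 ≤ n) (l : List A) (hl : l.length = n)
    (hprim : ∀ x ∈ l, δ x = 0) :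
    ∀ k, n ≤ k → deltaIter K A δ k (rightComb l) = 0 := by
  have hlnil : l ≠ [] := by
    intro h; rw [h] at hl; simp at hl; omega
  have hbase : deltaIter K A δ n (rightComb l) = 0 := by
    match n, hn, hl with
    | 1, _, hl =>
      show δ (rightComb l) = 0
      rw [delta_rightComb K A δ hui l hlnil hprim, hl]
      simp
    | (m+2), _, hl =>
      show (TensorProduct.assoc K A A (Tpow K A m)).toLinearMap
        ((TensorProduct.map δ LinearMap.id)
          (deltaIter K A δ (m + 1) (rightComb l))) = 0
      erw [main_formula K A δ hui (m+2) (by omega) l hl hprim (m+1) (by omega),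
        map_sum, map_sum]
      apply Finset.sum_eq_zero
      intro s _
      have hsub := (Finset.mem_powersetCard.mp s.2).1
      have hs_eq : s.1 = Finset.Icc 1 (m + 2 - 1) :=
        Finset.eq_of_subset_of_card_le hsub
          (by rw [(Finset.mem_powersetCard.mp s.2).2, Nat.card_Icc]; omega)
      have h1mem : (1 : ℕ) ∈ s.1 := by
        rw [hs_eq, Finset.mem_Icc]; omega
      have hne : s.1.Nonempty := ⟨1, h1mem⟩
      have hc0 : s.1.orderEmbOfFin ((Finset.mem_powersetCard.mp s.2).2) 0 = 1 := by
        rw [orderEmbOfFin_zero' ((Finset.mem_powersetCard.mp s.2).2)]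
        have h1 := Finset.min'_le s.1 1 h1mem
        have h2 := hsub (s.1.min'_mem hne)
        rw [Finset.mem_Icc] at h2
        omega
      have hdelta : δ (rightComb (l.take
          (s.1.orderEmbOfFin ((Finset.mem_powersetCard.mp s.2).2) 0))) = 0 := by
        rw [hc0]
        have hlen1 : (l.take 1).length = 1 := by
          rw [List.length_take, hl]; omega
        rw [delta_rightComb K A δ hui (l.take 1)
          (List.ne_nil_of_length_pos (by rw [hlen1]; omega))
          (fun z hz => hprim z (List.take_subset _ _ hz))]
        rw [hlen1]
        simp
      rw [segTensor_eq_tmul, TensorProduct.map_tmul]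
      show (TensorProduct.assoc K A A (Tpow K A m)).toLinearMap
        (δ (rightComb (l.take
          (s.1.orderEmbOfFin ((Finset.mem_powersetCard.mp s.2).2) 0))) ⊗ₜ[K] _) = 0
      rw [hdelta, TensorProduct.zero_tmul, map_zero]
  intro k hk
  induction k, hk using Nat.le_induction with
  | base => exact hbase
  | succ k hk ihk =>
    have hk1 : 1 ≤ k := le_trans hn hk
    obtain ⟨m, rfl⟩ : ∃ m, k = m + 1 := ⟨k - 1, by omega⟩
    show (TensorProduct.assoc K A A (Tpow K A m)).toLinearMap
      ((TensorProduct.map δ LinearMap.id)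
        (deltaIter K A δ (m + 1) (rightComb l))) = 0
    erw [ihk, map_zero]

/-- The iterated coproduct of a right comb of `n` primitive elements: for
`1 ≤ k ≤ n-1` it is the sum, over all increasing sequences
`1 ≤ i₁ < … < i_k ≤ n-1` of cut points, of the tensor products of the right combs
of the corresponding segments; it vanishes for `k ≥ n`. -/
theorem deltaIter_rightComb_of_primitives
    (δ : A →ₗ[K] A ⊗[K] A) (hui : IsUICoproduct K A δ) (hco : IsCoassoc K A δ)
    (n : ℕ) (hn : 1 ≤ n) (l : List A) (hl : l.length = n)
    (hprim : ∀ x ∈ l, δ x = 0) :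
    (∀ k, 1 ≤ k → k ≤ n - 1 →
      deltaIter K A δ k (rightComb l) =
        ∑ s ∈ ((Finset.Icc 1 (n - 1)).powersetCard k).attach,
          segTensor K A k
            (fun j => (s.1.orderIsoOfFin ((Finset.mem_powersetCard.mp s.2).2) j : ℕ)) l)
    ∧ (∀ k, n ≤ k → deltaIter K A δ k (rightComb l) = 0) := by
  constructor
  · intro k _ hk2
    exact main_formula K A δ hui n hn l hl hprim k hk2
  · intro k hk
    exact zero_formula K A δ hui n hn l hl hprim k hk
end

section
/- Let A be a magmatic algebra over a field K with a coassociative reduced unital-infinitesimal coproduct δ, and let x₁, …, xₙ (n ≥ 2) be primitive elements of A. Then e(ρⁿ(x₁,…,xₙ)) = 0, i.e. ρⁿ(x₁,…,xₙ) + Σ_{k=1}^{n−1} (−1)ᵏ ω^{k+1}(δᵏ(ρⁿ(x₁,…,xₙ))) = 0, where ω^{k+1} denotes the linear map A^{⊗(k+1)} → A induced by the left comb (the sum is finite since δᵏ(ρⁿ(x₁,…,xₙ)) = 0 for k ≥ n). -/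
open TensorProduct

universe u v

variable (K : Type u) [Field K] (A : Type v) [NonUnitalNonAssocRing A]
  [Module K A] [SMulCommClass K A A] [IsScalarTower K A A]

/-- `mulLeft x` on the first tensor factor of `Tpow k`. -/
noncomputable def fstMul (x : A) : (k : ℕ) → Tpow K A k →ₗ[K] Tpow K A k
  | 0 => (LinearMap.mulLeft K x : A →ₗ[K] A)
  | k + 1 =>
    (TensorProduct.map (LinearMap.mulLeft K x)
        (LinearMap.id : Tpow K A k →ₗ[K] Tpow K A k) :
      A ⊗[K] Tpow K A k →ₗ[K] A ⊗[K] Tpow K A k)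

theorem fstMul_succ (x : A) (k : ℕ) (t : A ⊗[K] Tpow K A k) :
    fstMul K A x (k + 1) t =
      TensorProduct.map (LinearMap.mulLeft K x)
        (LinearMap.id : Tpow K A k →ₗ[K] Tpow K A k) t := rfl

set_option linter.unusedSectionVars false

theorem deltaIter_succ (δ : A →ₗ[K] A ⊗[K] A) (k : ℕ) (a : A) :
    deltaIter K A δ (k + 2) a =
      (TensorProduct.assoc K A A (Tpow K A k))
        (TensorProduct.map δ LinearMap.id (deltaIter K A δ (k + 1) a)) := rfl

theorem aux_assoc (δ : A →ₗ[K] A ⊗[K] A) (hui : IsUICoproduct K A δ)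
    (x : A) (hx : δ x = 0) (k : ℕ) (v : A ⊗[K] Tpow K A k) :
    (TensorProduct.assoc K A A (Tpow K A k))
        (TensorProduct.map δ LinearMap.id
          (TensorProduct.map (LinearMap.mulLeft K x)
            (LinearMap.id : Tpow K A k →ₗ[K] Tpow K A k) v)) =
      x ⊗ₜ[K] v +
        TensorProduct.map (LinearMap.mulLeft K x)
          (LinearMap.id : (A ⊗[K] Tpow K A k) →ₗ[K] (A ⊗[K] Tpow K A k))
          ((TensorProduct.assoc K A A (Tpow K A k))
            (TensorProduct.map δ LinearMap.id v)) := by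
  induction v with
  | zero => simp
  | tmul a c =>
      have h : δ (x * a) =
          TensorProduct.map (LinearMap.mulLeft K x) LinearMap.id (δ a) + x ⊗ₜ[K] a := by
        rw [hui x a, hx]; simp
      simp only [TensorProduct.map_tmul, LinearMap.mulLeft_apply, LinearMap.id_coe, id_eq, h,
        TensorProduct.add_tmul]
      rw [map_add]
      have h2 : ∀ u : A ⊗[K] A,
          (TensorProduct.assoc K A A (Tpow K A k))
              ((TensorProduct.map (LinearMap.mulLeft K x) LinearMap.id u) ⊗ₜ[K] c) =
            TensorProduct.map (LinearMap.mulLeft K x)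
              (LinearMap.id : (A ⊗[K] Tpow K A k) →ₗ[K] (A ⊗[K] Tpow K A k))
              ((TensorProduct.assoc K A A (Tpow K A k)) (u ⊗ₜ[K] c)) := by
        intro u
        induction u with
        | zero => simp
        | tmul p q => simp
        | add p q hp hq =>
            rw [map_add, TensorProduct.add_tmul, map_add, TensorProduct.add_tmul, map_add,
              map_add, hp, hq]
      rw [h2]
      simp [add_comm]
  | add p q hp hq =>
      simp only [map_add, TensorProduct.tmul_add, hp, hq]
      abel

/-- Key formula: `δ^{k+1}(x·w) = x ⊗ δᵏ(w) + (mulLeft x ⊗ id)(δ^{k+1}(w))` for `x` primitive. -/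
theorem deltaIter_mulLeft (δ : A →ₗ[K] A ⊗[K] A) (hui : IsUICoproduct K A δ)
    (x : A) (hx : δ x = 0) :
    ∀ (k : ℕ) (w : A),
      deltaIter K A δ (k + 1) (x * w) =
        x ⊗ₜ[K] (deltaIter K A δ k w) +
          TensorProduct.map (LinearMap.mulLeft K x)
            (LinearMap.id : Tpow K A k →ₗ[K] Tpow K A k)
            (deltaIter K A δ (k + 1) w)
  | 0, w => by
      show δ (x * w) =
        x ⊗ₜ[K] w + TensorProduct.map (LinearMap.mulLeft K x) LinearMap.id (δ w)
      rw [hui x w, hx]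
      simp [add_comm]
  | k + 1, w => by
      rw [deltaIter_succ, deltaIter_mulLeft δ hui x hx k w, map_add, map_add]
      have h1 : (TensorProduct.assoc K A A (Tpow K A k))
          (TensorProduct.map δ LinearMap.id (x ⊗ₜ[K] deltaIter K A δ k w)) = 0 := by
        simp [hx]
      rw [h1, zero_add, aux_assoc K A δ hui x hx k (deltaIter K A δ (k + 1) w),
        ← deltaIter_succ]
      rfl

/-- Iterated coproducts of a primitive element vanish. -/
theorem deltaIter_primitive (δ : A →ₗ[K] A ⊗[K] A) (x : A) (hx : δ x = 0) :
    ∀ k : ℕ, deltaIter K A δ (k + 1) x = 0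
  | 0 => hx
  | k + 1 => by
    rw [deltaIter_succ, deltaIter_primitive δ x hx k]
    exact (congrArg _ (map_zero (TensorProduct.map δ LinearMap.id))).trans (map_zero _)

theorem rightComb_cons (x : A) (t : List A) (ht : t ≠ []) :
    rightComb (x :: t) = x * rightComb t := by
  cases t with
  | nil => exact absurd rfl ht
  | cons y ys => rfl

/-- `δᵏ(ρ(l)) = 0` for `k ≥ length l`, `l` a nonempty list of primitives. -/
theorem deltaIter_rightComb_eq_zero (δ : A →ₗ[K] A ⊗[K] A) (hui : IsUICoproduct K A δ) :
    ∀ (l : List A), l ≠ [] → (∀ x ∈ l, δ x = 0) →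
      ∀ k : ℕ, l.length ≤ k → deltaIter K A δ k (rightComb l) = 0
  | [], h, _, _, _ => absurd rfl h
  | [x], _, hprim, k, hk => by
      obtain ⟨j, rfl⟩ : ∃ j, k = j + 1 := ⟨k - 1, by simp at hk; omega⟩
      exact deltaIter_primitive K A δ x (hprim x (by simp)) j
  | x :: y :: ys, _, hprim, k, hk => by
      obtain ⟨j, rfl⟩ : ∃ j, k = j + 1 := ⟨k - 1, by simp at hk; omega⟩
      have ht : (y :: ys) ≠ [] := by simp
      have hprim' : ∀ z ∈ y :: ys, δ z = 0 := fun z hz => hprim z (by simp [hz])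
      have hlen : (y :: ys).length ≤ j := by simp at hk ⊢; omega
      rw [rightComb_cons (A := A) x (y :: ys) ht,
        deltaIter_mulLeft K A δ hui x (hprim x (by simp)) j,
        deltaIter_rightComb_eq_zero δ hui (y :: ys) ht hprim' j hlen,
        deltaIter_rightComb_eq_zero δ hui (y :: ys) ht hprim' (j + 1)
          (le_trans hlen (Nat.le_succ j))]
      simp
      exact map_zero _

theorem leftCombMap_succ (m : ℕ) (u : A ⊗[K] (A ⊗[K] Tpow K A m)) :
    leftCombMap K A (m + 2) u =
      leftCombMap K A (m + 1)
        (TensorProduct.map (TensorProduct.lift (LinearMap.mul K A)) LinearMap.id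
          ((TensorProduct.assoc K A A (Tpow K A m)).symm u)) := rfl

/-- `ω^{k+2}(x ⊗ t) = ω^{k+1}((mulLeft x ⊗ id) t)`. -/
theorem leftCombMap_tmul (x : A) :
    ∀ (k : ℕ) (t : Tpow K A k),
      leftCombMap K A (k + 1) (x ⊗ₜ[K] t) = leftCombMap K A k (fstMul K A x k t)
  | 0, t => rfl
  | m + 1, t => by
      have key : ∀ v : A ⊗[K] Tpow K A m,
          leftCombMap K A (m + 2) (x ⊗ₜ[K] v) =
            leftCombMap K A (m + 1)
              (TensorProduct.map (LinearMap.mulLeft K x)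
                (LinearMap.id : Tpow K A m →ₗ[K] Tpow K A m) v) := by
        intro v
        induction v with
        | zero => erw [TensorProduct.tmul_zero, map_zero]
        | tmul b r => erw [leftCombMap_succ, TensorProduct.assoc_symm_tmul]
        | add p q hp hq => erw [TensorProduct.tmul_add, map_add, hp, hq, map_add, map_add]
      erw [fstMul_succ]
      exact key t

theorem telescope (G : ℕ → A) (m : ℕ) :
    G 0 + ∑ k ∈ Finset.Icc 1 m, ((-1 : K) ^ k) • (G (k - 1) + G k) =
      ((-1 : K) ^ m) • G m := by
  induction m with
  | zero => simp
  | succ m ih =>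
      rw [Finset.sum_Icc_succ_top (by omega), ← add_assoc, ih]
      simp only [Nat.add_sub_cancel, smul_add, pow_succ]
      module

/-- The idempotent `e` kills right combs of primitive elements:
`ρⁿ(x₁,…,xₙ) + Σ_{k=1}^{n-1} (-1)ᵏ ω^{k+1}(δᵏ(ρⁿ(x₁,…,xₙ))) = 0`
for `n ≥ 2` and `x₁,…,xₙ` primitive (the sum stops at `n-1` since
`δᵏ(ρⁿ(x₁,…,xₙ)) = 0` for `k ≥ n`). -/
theorem e_rightComb_of_primitives
    (δ : A →ₗ[K] A ⊗[K] A) (hui : IsUICoproduct K A δ) (hco : IsCoassoc K A δ)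
    (n : ℕ) (hn : 2 ≤ n) (l : List A) (hl : l.length = n)
    (hprim : ∀ x ∈ l, δ x = 0) :
    rightComb l +
      ∑ k ∈ Finset.Icc 1 (n - 1),
        ((-1 : K) ^ k) • leftCombMap K A k (deltaIter K A δ k (rightComb l)) = 0 := by
  obtain ⟨x, t, rfl⟩ : ∃ x t, l = x :: t := by
    cases l with
    | nil => simp at hl; omega
    | cons x t => exact ⟨x, t, rfl⟩
  have ht : t ≠ [] := by
    cases t with
    | nil => simp at hl; omega
    | cons _ _ => simp
  have hx : δ x = 0 := hprim x (by simp)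
  have hw : rightComb (x :: t) = x * rightComb t := rightComb_cons (A := A) x t ht
  set w := rightComb t with hwdef
  set G : ℕ → A := fun k => leftCombMap K A k (fstMul K A x k (deltaIter K A δ k w))
    with hG
  have hsum : ∀ k ∈ Finset.Icc 1 (n - 1),
      ((-1 : K) ^ k) • leftCombMap K A k (deltaIter K A δ k (rightComb (x :: t))) =
        ((-1 : K) ^ k) • (G (k - 1) + G k) := by
    intro k hk
    obtain ⟨j, rfl⟩ : ∃ j, k = j + 1 := by
      refine ⟨k - 1, ?_⟩
      have := (Finset.mem_Icc.mp hk).1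
      omega
    rw [hw, deltaIter_mulLeft K A δ hui x hx j w]
    erw [map_add]
    erw [
      leftCombMap_tmul K A x j (deltaIter K A δ j w)]
    simp only [Nat.add_sub_cancel, hG, fstMul_succ]
    rfl
  rw [Finset.sum_congr rfl hsum]
  have hG0 : rightComb (x :: t) = G 0 := by
    rw [hw]; rfl
  rw [hG0, telescope K A G (n - 1)]
  have hz : deltaIter K A δ (n - 1) w = 0 := by
    refine deltaIter_rightComb_eq_zero K A δ hui t ht
      (fun z hz => hprim z (by simp [hz])) (n - 1) ?_
    simp at hl; omega
  simp only [hG, hz, map_zero, smul_zero]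
end

section
/- Let A be a magmatic algebra over a field K with a coassociative reduced unital-infinitesimal coproduct δ, and let x ∈ A satisfy δⁿ(x) = 0 for all n ≥ N. Then e(x) := x + Σ_{n=1}^{N−1} (−1)ⁿ ω^{n+1}(δⁿ(x)) is primitive: δ(e(x)) = 0. -/
open TensorProduct

universe u v

variable (K : Type u) [Field K] (A : Type v) [NonUnitalNonAssocRing A]
  [Module K A] [SMulCommClass K A A] [IsScalarTower K A A]

/-! ### Auxiliary development for `e_primitive` -/

namespace EPrimAux

open TensorProduct LinearMap

variable {K : Type u} [Field K] {A : Type v} [NonUnitalNonAssocRing A]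
  [Module K A] [SMulCommClass K A A] [IsScalarTower K A A]

/-- The multiplication map `A ⊗ A → A`. -/
noncomputable def mulT (K : Type u) [Field K] (A : Type v) [NonUnitalNonAssocRing A]
    [Module K A] [SMulCommClass K A A] [IsScalarTower K A A] : A ⊗[K] A →ₗ[K] A :=
  TensorProduct.lift (LinearMap.mul K A)

@[simp] lemma mulT_tmul (a b : A) : mulT K A (a ⊗ₜ[K] b) = a * b := rfl

/-- Iterated associator `Tpow n ⊗ A ≃ Tpow (n+1)`. -/
noncomputable def alphaE (K : Type u) [Field K] (A : Type v) [NonUnitalNonAssocRing A]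
    [Module K A] [SMulCommClass K A A] [IsScalarTower K A A] :
    (n : ℕ) → (Tpow K A n ⊗[K] A ≃ₗ[K] Tpow K A (n + 1))
  | 0 => LinearEquiv.refl K (A ⊗[K] A)
  | n + 1 =>
    (TensorProduct.assoc K A (Tpow K A n) A) ≪≫ₗ
      TensorProduct.congr (LinearEquiv.refl K A) (alphaE K A n)

@[simp] lemma alphaE_zero_apply (z : A ⊗[K] A) : alphaE K A 0 z = z := rfl

@[simp] lemma alphaE_succ_tmul (n : ℕ) (a : A) (t : Tpow K A n) (b : A) :
    alphaE K A (n + 1) ((a ⊗ₜ[K] t) ⊗ₜ[K] b) = a ⊗ₜ[K] alphaE K A n (t ⊗ₜ[K] b) := by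
  show (TensorProduct.congr (LinearEquiv.refl K A) (alphaE K A n))
      ((TensorProduct.assoc K A (Tpow K A n) A) ((a ⊗ₜ[K] t) ⊗ₜ[K] b)) = _
  rw [TensorProduct.assoc_tmul, TensorProduct.congr_tmul]
  rfl

variable (δ : A →ₗ[K] A ⊗[K] A)

/-- `δ` applied to the first tensor factor of `Tpow n`. -/
noncomputable def fd : (n : ℕ) → Tpow K A n →ₗ[K] Tpow K A (n + 1)
  | 0 => δ
  | n + 1 =>
    (TensorProduct.assoc K A A (Tpow K A n)).toLinearMap
      ∘ₗ (TensorProduct.map δ LinearMap.id :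
            A ⊗[K] Tpow K A n →ₗ[K] (A ⊗[K] A) ⊗[K] Tpow K A n)

lemma fd_succ_tmul (n : ℕ) (a : A) (t : Tpow K A n) :
    fd δ (n + 1) (a ⊗ₜ[K] t) =
      (TensorProduct.assoc K A A (Tpow K A n)) ((δ a) ⊗ₜ[K] t) := by
  show (TensorProduct.assoc K A A (Tpow K A n)).toLinearMap
      ((TensorProduct.map δ LinearMap.id) (a ⊗ₜ[K] t)) = _
  rw [TensorProduct.map_tmul]
  rfl

lemma fd_deltaIter (n : ℕ) (x : A) :
    fd δ n (deltaIter K A δ n x) = deltaIter K A δ (n + 1) x := by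
  cases n <;> rfl

/-- Naturality of `alphaE` with respect to `δ` on the first factor. -/
lemma alphaE_one_tmul (u v b : A) :
    alphaE K A 1 ((u ⊗ₜ[K] v) ⊗ₜ[K] b) = u ⊗ₜ[K] (v ⊗ₜ[K] b) :=
  alphaE_succ_tmul 0 u v b

lemma nat_fd (n : ℕ) (z : Tpow K A n ⊗[K] A) :
    fd δ (n + 1) (alphaE K A n z) =
      alphaE K A (n + 1) (TensorProduct.map (fd δ n) LinearMap.id z) := by
  cases n with
  | zero =>
    induction z using TensorProduct.induction_on with
    | zero => simp
    | add u v hu hv => simp only [map_add, hu, hv]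
    | tmul a b =>
      rw [TensorProduct.map_tmul]
      show fd δ 1 (a ⊗ₜ[K] b) = alphaE K A 1 ((δ a) ⊗ₜ[K] b)
      erw [fd_succ_tmul]
      induction (δ a) using TensorProduct.induction_on with
      | zero => erw [TensorProduct.zero_tmul, map_zero]
      | tmul u v => rfl
      | add u v hu hv =>
        erw [TensorProduct.add_tmul, map_add, hu, hv]; exact (map_add _ _ _).symm
  | succ m =>
    induction z using TensorProduct.induction_on with
    | zero => simp
    | add u v hu hv => simp only [map_add, hu, hv]
    | tmul s b =>
      induction s using TensorProduct.induction_on with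
      | zero => erw [TensorProduct.zero_tmul]; simp
      | add s₁ s₂ h1 h2 =>
        erw [TensorProduct.add_tmul]; simp only [map_add, h1, h2]
      | tmul a t =>
        change Tpow K A m at t
        show (TensorProduct.assoc K A A (Tpow K A (m + 1))) ((δ a) ⊗ₜ[K] alphaE K A m (t ⊗ₜ[K] b)) =
          alphaE K A (m + 1 + 1) ((TensorProduct.assoc K A A (Tpow K A m) ((δ a) ⊗ₜ[K] t)) ⊗ₜ[K] b)
        induction (δ a) using TensorProduct.induction_on with
        | zero => erw [TensorProduct.zero_tmul, map_zero]
        | tmul u v => rfl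
        | add u v hu hv =>
          erw [TensorProduct.add_tmul, map_add, hu, hv]
          rw [TensorProduct.add_tmul, map_add]; erw [TensorProduct.add_tmul, map_add]
          rfl

/-- Peel-last-factor form of the iterated coproduct. -/
lemma deltaIter_succ_eq (n : ℕ) (x : A) :
    deltaIter K A δ (n + 1) x =
      alphaE K A n (TensorProduct.map (deltaIter K A δ n) LinearMap.id (δ x)) := by
  induction n with
  | zero =>
    show δ x = alphaE K A 0 (TensorProduct.map LinearMap.id LinearMap.id (δ x))
    simp
    rfl
  | succ n ih =>
    rw [← fd_deltaIter δ (n + 1) x, ih, nat_fd]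
    congr 1
    have hc : fd δ n ∘ₗ deltaIter K A δ n = deltaIter K A δ (n + 1) :=
      LinearMap.ext (fd_deltaIter δ n)
    calc TensorProduct.map (fd δ n) LinearMap.id
          (TensorProduct.map (deltaIter K A δ n) LinearMap.id (δ x))
        = (TensorProduct.map (fd δ n) LinearMap.id ∘ₗ
            TensorProduct.map (deltaIter K A δ n) LinearMap.id) (δ x) := rfl
      _ = TensorProduct.map (fd δ n ∘ₗ deltaIter K A δ n)
            (LinearMap.id ∘ₗ LinearMap.id) (δ x) := by
          rw [TensorProduct.map_comp]
      _ = TensorProduct.map (deltaIter K A δ (n + 1)) LinearMap.id (δ x) := by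
          rw [hc, LinearMap.id_comp]


/-- A linear map `A → A` applied to the first tensor factor of `Tpow n`. -/
noncomputable def fm (f : A →ₗ[K] A) : (n : ℕ) → Tpow K A n →ₗ[K] Tpow K A n
  | 0 => f
  | n + 1 =>
    (TensorProduct.map f LinearMap.id : A ⊗[K] Tpow K A n →ₗ[K] A ⊗[K] Tpow K A n)

lemma nat_fm (f : A →ₗ[K] A) (n : ℕ) (z : Tpow K A n ⊗[K] A) :
    fm f (n + 1) (alphaE K A n z) =
      alphaE K A n (TensorProduct.map (fm f n) LinearMap.id z) := by
  cases n with
  | zero =>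
    induction z using TensorProduct.induction_on with
    | zero => simp
    | add u v hu hv => simp only [map_add, hu, hv]
    | tmul a b =>
      rfl
  | succ m =>
    induction z using TensorProduct.induction_on with
    | zero => simp
    | add u v hu hv => simp only [map_add, hu, hv]
    | tmul s b =>
      induction s using TensorProduct.induction_on with
      | zero => erw [TensorProduct.zero_tmul]; simp
      | add s₁ s₂ h1 h2 => erw [TensorProduct.add_tmul]; simp only [map_add, h1, h2]
      | tmul a t =>
        rfl

lemma mulT_first (n : ℕ) (a : A) (s : Tpow K A (n + 1)) :
    TensorProduct.map (mulT K A) LinearMap.id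
        ((TensorProduct.assoc K A A (Tpow K A n)).symm (a ⊗ₜ[K] s)) =
      fm (LinearMap.mulLeft K a) (n + 1) s := by
  induction s using TensorProduct.induction_on with
  | zero => erw [TensorProduct.tmul_zero]; simp; exact (map_zero _).symm
  | add u v hu hv => erw [TensorProduct.tmul_add]; simp only [map_add, hu, hv]; exact (map_add _ u v).symm
  | tmul c u =>
    erw [TensorProduct.assoc_symm_tmul, TensorProduct.map_tmul]

lemma leftComb_cons (n : ℕ) (a : A) (t : Tpow K A n) :
    leftCombMap K A (n + 1) (a ⊗ₜ[K] t) =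
      leftCombMap K A n (fm (LinearMap.mulLeft K a) n t) := by
  cases n with
  | zero => rfl
  | succ m => exact congrArg (leftCombMap K A (m + 1)) (mulT_first m a t)

lemma leftComb_alphaE (n : ℕ) (z : Tpow K A n ⊗[K] A) :
    leftCombMap K A (n + 1) (alphaE K A n z) =
      mulT K A (TensorProduct.map (leftCombMap K A n) LinearMap.id z) := by
  induction n with
  | zero =>
    induction z using TensorProduct.induction_on with
    | zero => simp
    | add u v hu hv => simp only [map_add, hu, hv]
    | tmul a b =>
      rfl
  | succ m ih =>
    induction z using TensorProduct.induction_on with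
    | zero => simp
    | add u v hu hv => simp only [map_add, hu, hv]
    | tmul s b =>
      induction s using TensorProduct.induction_on with
      | zero => erw [TensorProduct.zero_tmul]; simp
      | add s₁ s₂ h1 h2 => erw [TensorProduct.add_tmul]; simp only [map_add, h1, h2]
      | tmul a t =>
        change Tpow K A m at t
        show leftCombMap K A (m + 1 + 1) (a ⊗ₜ[K] alphaE K A m (t ⊗ₜ[K] b)) =
          mulT K A (leftCombMap K A (m + 1) (a ⊗ₜ[K] t) ⊗ₜ[K] b)
        rw [leftComb_cons (m + 1) a, nat_fm, ih, leftComb_cons m a]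
        rw [TensorProduct.map_tmul, TensorProduct.map_tmul]
        simp only [LinearMap.id_coe, id_eq]


lemma r1 (b : A) (t : A ⊗[K] A) :
    TensorProduct.map LinearMap.id (mulT K A)
        ((TensorProduct.assoc K A A A) (t ⊗ₜ[K] b)) =
      TensorProduct.map LinearMap.id (LinearMap.mulRight K b) t := by
  induction t using TensorProduct.induction_on with
  | zero => simp
  | add u v hu hv => simp only [TensorProduct.add_tmul, map_add, hu, hv]
  | tmul u v =>
    rw [TensorProduct.assoc_tmul, TensorProduct.map_tmul, TensorProduct.map_tmul]
    rfl

lemma r2 (a : A) (t : A ⊗[K] A) :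
    TensorProduct.map (mulT K A) LinearMap.id
        ((TensorProduct.assoc K A A A).symm (a ⊗ₜ[K] t)) =
      TensorProduct.map (LinearMap.mulLeft K a) LinearMap.id t := by
  induction t using TensorProduct.induction_on with
  | zero => simp
  | add u v hu hv => simp only [TensorProduct.tmul_add, map_add, hu, hv]
  | tmul u v =>
    rw [TensorProduct.assoc_symm_tmul, TensorProduct.map_tmul, TensorProduct.map_tmul]
    rfl

lemma hui_pt (hui : IsUICoproduct K A δ) (t : A ⊗[K] A) :
    δ (mulT K A t) =
      TensorProduct.map LinearMap.id (mulT K A)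
          ((TensorProduct.assoc K A A A) (TensorProduct.map δ LinearMap.id t)) +
        TensorProduct.map (mulT K A) LinearMap.id
          ((TensorProduct.assoc K A A A).symm (TensorProduct.map LinearMap.id δ t)) +
        t := by
  induction t using TensorProduct.induction_on with
  | zero => simp
  | add u v hu hv =>
    simp only [map_add, hu, hv]
    abel
  | tmul a b =>
    rw [mulT_tmul, hui a b, TensorProduct.map_tmul, TensorProduct.map_tmul]
    simp only [LinearMap.id_coe, id_eq]
    rw [r1, r2]

lemma assoc_nat (f : A →ₗ[K] A) (w : (A ⊗[K] A) ⊗[K] A) :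
    (TensorProduct.assoc K A A A).symm
        (TensorProduct.map f LinearMap.id ((TensorProduct.assoc K A A A) w)) =
      TensorProduct.map (TensorProduct.map f LinearMap.id) LinearMap.id w := by
  induction w using TensorProduct.induction_on with
  | zero => simp
  | add u v hu hv => simp only [map_add, hu, hv]
  | tmul s c =>
    induction s using TensorProduct.induction_on with
    | zero => simp [TensorProduct.zero_tmul]
    | add s₁ s₂ h1 h2 => simp only [TensorProduct.add_tmul, map_add, h1, h2]
    | tmul u v =>
      rw [TensorProduct.assoc_tmul, TensorProduct.map_tmul]
      simp only [LinearMap.id_coe, id_eq]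
      rw [TensorProduct.assoc_symm_tmul, TensorProduct.map_tmul,
        TensorProduct.map_tmul]
      simp only [LinearMap.id_coe, id_eq]

lemma map_first_comp {M N P : Type v} [AddCommGroup M] [AddCommGroup N]
    [AddCommGroup P] [Module K M] [Module K N] [Module K P]
    (f : N →ₗ[K] P) (g : M →ₗ[K] N) (u : M ⊗[K] A) :
    TensorProduct.map f LinearMap.id (TensorProduct.map g LinearMap.id u) =
      TensorProduct.map (f ∘ₗ g) LinearMap.id u := by
  rw [← LinearMap.comp_apply, ← TensorProduct.map_comp, LinearMap.id_comp]

lemma map_mixed (f : A →ₗ[K] A) (g : A →ₗ[K] A ⊗[K] A) (u : A ⊗[K] A) :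
    TensorProduct.map LinearMap.id g (TensorProduct.map f LinearMap.id u) =
      TensorProduct.map f LinearMap.id (TensorProduct.map LinearMap.id g u) := by
  rw [← LinearMap.comp_apply, ← TensorProduct.map_comp, ← LinearMap.comp_apply,
    ← TensorProduct.map_comp, LinearMap.id_comp, LinearMap.comp_id,
    LinearMap.id_comp, LinearMap.comp_id]

/-- The (truncated) Euler idempotent `e_m = Σ_{n=0}^m (-1)^n ω^{n+1} ∘ δ^n`. -/
noncomputable def eMap (m : ℕ) : A →ₗ[K] A :=
  ∑ n ∈ Finset.range (m + 1),
    ((-1 : K) ^ n) • (leftCombMap K A n ∘ₗ deltaIter K A δ n)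

lemma eMap_zero (x : A) : eMap δ 0 x = x := by
  simp only [eMap, zero_add, Finset.sum_range_one, pow_zero, one_smul,
    LinearMap.comp_apply]
  rfl

lemma eMap_succ (m : ℕ) (x : A) :
    eMap δ (m + 1) x = eMap δ m x +
      ((-1 : K) ^ (m + 1)) •
        leftCombMap K A (m + 1) (deltaIter K A δ (m + 1) x) := by
  simp only [eMap, Finset.sum_range_succ, LinearMap.add_apply, LinearMap.smul_apply,
    LinearMap.comp_apply]

lemma E_rec (n : ℕ) (x : A) :
    leftCombMap K A (n + 1) (deltaIter K A δ (n + 1) x) =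
      mulT K A (TensorProduct.map (leftCombMap K A n ∘ₗ deltaIter K A δ n)
        LinearMap.id (δ x)) := by
  rw [deltaIter_succ_eq, leftComb_alphaE, map_first_comp]

lemma mul_e (m : ℕ) (x : A) :
    mulT K A (TensorProduct.map (eMap δ m) LinearMap.id (δ x)) =
      x - eMap δ (m + 1) x := by
  have hid : (leftCombMap K A 0 ∘ₗ deltaIter K A δ 0 : A →ₗ[K] A) = LinearMap.id :=
    LinearMap.ext fun _ => rfl
  induction m with
  | zero =>
    have h0 : eMap δ 0 = LinearMap.id := LinearMap.ext (eMap_zero δ)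
    rw [h0, TensorProduct.map_id, LinearMap.id_coe, id_eq, eMap_succ δ 0 x,
      eMap_zero δ x, E_rec δ 0 x, hid, TensorProduct.map_id, LinearMap.id_coe,
      id_eq, pow_one, neg_one_smul]
    abel
  | succ m ih =>
    have hsum : eMap δ (m + 1) = eMap δ m + ((-1 : K) ^ (m + 1)) •
        (leftCombMap K A (m + 1) ∘ₗ deltaIter K A δ (m + 1)) := by
      simp only [eMap, Finset.sum_range_succ]
    rw [hsum, TensorProduct.map_add_left, TensorProduct.map_smul_left,
      LinearMap.add_apply, LinearMap.smul_apply, map_add, map_smul, ih,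
      ← E_rec δ (m + 1) x, eMap_succ δ (m + 1) x, pow_succ (-1 : K) (m + 1),
      mul_neg_one, neg_smul]
    abel

lemma map_sub_left (f g : A →ₗ[K] A) :
    TensorProduct.map (f - g) (LinearMap.id : A →ₗ[K] A) =
      TensorProduct.map f LinearMap.id - TensorProduct.map g LinearMap.id := by
  rw [sub_eq_add_neg, ← neg_one_smul K g, TensorProduct.map_add_left,
    TensorProduct.map_smul_left,
    neg_one_smul K (TensorProduct.map g (LinearMap.id : A →ₗ[K] A)),
    ← sub_eq_add_neg]

lemma key (hui : IsUICoproduct K A δ) (hco : IsCoassoc K A δ) (m : ℕ) :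
    ∃ T : Tpow K A (m + 1) →ₗ[K] A ⊗[K] A,
      ∀ x : A, δ (eMap δ m x) = T (deltaIter K A δ (m + 1) x) := by
  induction m with
  | zero =>
    refine ⟨LinearMap.id, fun x => ?_⟩
    rw [eMap_zero δ x]
    rfl
  | succ m ih =>
    obtain ⟨T, hT⟩ := ih
    refine ⟨-(TensorProduct.map LinearMap.id (mulT K A) ∘ₗ
        (TensorProduct.assoc K A A A).toLinearMap ∘ₗ
        TensorProduct.map T LinearMap.id ∘ₗ
        (alphaE K A (m + 1)).symm.toLinearMap) +
      ((-1 : K) ^ (m + 1)) •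
        (TensorProduct.map (leftCombMap K A (m + 1)) LinearMap.id ∘ₗ
          (alphaE K A (m + 1)).symm.toLinearMap), fun x => ?_⟩
    have hsum : eMap δ (m + 1) = eMap δ m + ((-1 : K) ^ (m + 1)) •
        (leftCombMap K A (m + 1) ∘ₗ deltaIter K A δ (m + 1)) := by
      simp only [eMap, Finset.sum_range_succ]
    have hT' : (δ ∘ₗ eMap δ m : A →ₗ[K] A ⊗[K] A) = T ∘ₗ deltaIter K A δ (m + 1) :=
      LinearMap.ext hT
    have hme : ((mulT K A ∘ₗ (TensorProduct.map (eMap δ m) LinearMap.id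
          : A ⊗[K] A →ₗ[K] A ⊗[K] A)) ∘ₗ δ) = LinearMap.id - eMap δ (m + 1) :=
      LinearMap.ext fun y => by
        simp only [LinearMap.comp_apply, LinearMap.sub_apply, LinearMap.id_coe, id_eq]
        exact mul_e δ m y
    have he : eMap δ (m + 1) x =
        x - mulT K A (TensorProduct.map (eMap δ m) LinearMap.id (δ x)) := by
      rw [mul_e δ m x]; abel
    have hdd : TensorProduct.map (deltaIter K A δ (m + 1)) LinearMap.id (δ x) =
        (alphaE K A (m + 1)).symm (deltaIter K A δ (m + 1 + 1) x) := by
      rw [deltaIter_succ_eq δ (m + 1) x, LinearEquiv.symm_apply_apply]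
    have hp1 : TensorProduct.map δ LinearMap.id
        (TensorProduct.map (eMap δ m) LinearMap.id (δ x)) =
        TensorProduct.map T LinearMap.id
          ((alphaE K A (m + 1)).symm (deltaIter K A δ (m + 1 + 1) x)) := by
      rw [map_first_comp, hT', ← map_first_comp, hdd]
    have hp2 : TensorProduct.map (mulT K A) LinearMap.id
        ((TensorProduct.assoc K A A A).symm (TensorProduct.map LinearMap.id δ
          (TensorProduct.map (eMap δ m) LinearMap.id (δ x)))) =
        δ x - TensorProduct.map (eMap δ (m + 1)) LinearMap.id (δ x) := by
      rw [map_mixed (eMap δ m) δ (δ x), ← hco x, assoc_nat, map_first_comp,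
        map_first_comp, hme, map_sub_left, LinearMap.sub_apply,
        TensorProduct.map_id, LinearMap.id_coe, id_eq]
    have hp3 : TensorProduct.map (eMap δ (m + 1)) LinearMap.id (δ x) =
        TensorProduct.map (eMap δ m) LinearMap.id (δ x) +
          ((-1 : K) ^ (m + 1)) • TensorProduct.map (leftCombMap K A (m + 1))
            LinearMap.id
            ((alphaE K A (m + 1)).symm (deltaIter K A δ (m + 1 + 1) x)) := by
      rw [hsum, TensorProduct.map_add_left, TensorProduct.map_smul_left,
        LinearMap.add_apply, LinearMap.smul_apply, ← map_first_comp, hdd]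
    rw [he, map_sub, hui_pt δ hui, hp1, hp2, hp3]
    simp only [LinearMap.add_apply, LinearMap.neg_apply, LinearMap.smul_apply,
      LinearMap.comp_apply, LinearEquiv.coe_coe]
    abel

end EPrimAux
/-- If `δⁿ(x) = 0` for all `n ≥ N` then
`e(x) = x + Σ_{n=1}^{N-1} (-1)ⁿ ω^{n+1}(δⁿ(x))` is primitive. -/
theorem e_primitive
    (δ : A →ₗ[K] A ⊗[K] A) (hui : IsUICoproduct K A δ) (hco : IsCoassoc K A δ)
    (x : A) (N : ℕ) (hN : ∀ n, N ≤ n → deltaIter K A δ n x = 0) :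
    δ (x + ∑ n ∈ Finset.Icc 1 (N - 1),
          ((-1 : K) ^ n) • leftCombMap K A n (deltaIter K A δ n x)) = 0 := by
  cases N with
  | zero =>
    have hx : δ x = 0 := hN 1 (Nat.zero_le 1)
    have h0 : (0 : ℕ) - 1 = 0 := rfl
    rw [h0, show Finset.Icc 1 0 = (∅ : Finset ℕ) from rfl, Finset.sum_empty,
      add_zero, hx]
  | succ m =>
    have hm : m + 1 - 1 = m := rfl
    rw [hm]
    have hset : Finset.range (m + 1) = insert 0 (Finset.Icc 1 m) := by
      ext i
      simp only [Finset.mem_range, Finset.mem_insert, Finset.mem_Icc]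
      omega
    have hsum : x + ∑ n ∈ Finset.Icc 1 m,
        ((-1 : K) ^ n) • leftCombMap K A n (deltaIter K A δ n x) =
        EPrimAux.eMap δ m x := by
      rw [EPrimAux.eMap]
      rw [LinearMap.coe_sum, Finset.sum_apply, hset,
        Finset.sum_insert (by simp)]
      simp only [LinearMap.smul_apply, LinearMap.comp_apply, pow_zero, one_smul]
      rfl
    rw [hsum]
    obtain ⟨T, hT⟩ := EPrimAux.key δ hui hco m
    rw [hT x, hN (m + 1) le_rfl, map_zero]
end

section
/- Let A be a magmatic algebra over a field K with a coassociative reduced unital-infinitesimal coproduct δ, and suppose A is conilpotent: for every x ∈ A there exists N with δⁿ(x) = 0 for all n ≥ N. Then for every x ∈ A one has the reconstruction formula x = Σ_{n≥0} ρ^{n+1}(e^{⊗(n+1)}(δⁿ(x))), where δ⁰ = id, the sum is finite, e : A → A is the (well-defined, linear) map e(x) = x + Σ_{k≥1} (−1)ᵏ ω^{k+1}(δᵏ(x)), e^{⊗(n+1)} is its (n+1)-fold tensor power, and ρ^{n+1} : A^{⊗(n+1)} → A is the linear map induced by the right comb. -/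
open TensorProduct

universe u v

variable (K : Type u) [Field K] (A : Type v) [NonUnitalNonAssocRing A]
  [Module K A] [SMulCommClass K A A] [IsScalarTower K A A]

/-- The `(n+1)`-fold tensor power `e^{⊗(n+1)} : A^{⊗(n+1)} → A^{⊗(n+1)}` of a linear
map `e : A → A`. -/
noncomputable def tensorPowMap (e : A →ₗ[K] A) : (n : ℕ) → Tpow K A n →ₗ[K] Tpow K A n
  | 0 => e
  | n + 1 => TensorProduct.map e (tensorPowMap e n)


/-! ### Auxiliary machinery -/

/-- Reassociator appending a last tensor factor: `A^{⊗(k+1)} ⊗ A → A^{⊗(k+2)}`. -/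
noncomputable def auxF : (k : ℕ) → (Tpow K A k) ⊗[K] A →ₗ[K] Tpow K A (k + 1)
  | 0 => LinearMap.id
  | k + 1 =>
    (TensorProduct.map LinearMap.id (auxF k)) ∘ₗ
      (TensorProduct.assoc K A (Tpow K A k) A).toLinearMap

/-- Applying `δ` to the head tensor factor. -/
noncomputable def auxD (δ : A →ₗ[K] A ⊗[K] A) : (k : ℕ) → Tpow K A k →ₗ[K] Tpow K A (k + 1)
  | 0 => δ
  | k + 1 =>
    (TensorProduct.assoc K A A (Tpow K A k)).toLinearMap ∘ₗ
      (TensorProduct.map δ LinearMap.id :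
        A ⊗[K] Tpow K A k →ₗ[K] (A ⊗[K] A) ⊗[K] Tpow K A k)

lemma deltaIter_succ_apply (δ : A →ₗ[K] A ⊗[K] A) (n : ℕ) (x : A) :
    deltaIter K A δ (n + 1) x = auxD K A δ n (deltaIter K A δ n x) := by
  cases n with
  | zero => rfl
  | succ n => rfl

section MapHelpers

variable {M N P Q M' N' P' : Type v} [AddCommGroup M] [Module K M] [AddCommGroup N] [Module K N]
  [AddCommGroup P] [Module K P] [AddCommGroup Q] [Module K Q]
  [AddCommGroup M'] [Module K M'] [AddCommGroup N'] [Module K N']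
  [AddCommGroup P'] [Module K P']

lemma aux_rmap_rmap (g : M →ₗ[K] N) (h : N →ₗ[K] P) (t : M ⊗[K] Q) :
    TensorProduct.map (h ∘ₗ g) LinearMap.id t
      = TensorProduct.map h LinearMap.id (TensorProduct.map g LinearMap.id t) := by
  rw [← LinearMap.comp_apply, ← TensorProduct.map_comp, LinearMap.id_comp]

lemma aux_lmap_lmap (g : M →ₗ[K] N) (h : N →ₗ[K] P) (t : Q ⊗[K] M) :
    TensorProduct.map LinearMap.id (h ∘ₗ g) t
      = TensorProduct.map LinearMap.id h (TensorProduct.map LinearMap.id g t) := by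
  rw [← LinearMap.comp_apply, ← TensorProduct.map_comp, LinearMap.id_comp]

lemma aux_map_map (f : M →ₗ[K] N) (g : N →ₗ[K] P) (f' : M' →ₗ[K] N') (g' : N' →ₗ[K] P')
    (t : M ⊗[K] M') :
    TensorProduct.map g g' (TensorProduct.map f f' t)
      = TensorProduct.map (g ∘ₗ f) (g' ∘ₗ f') t := by
  rw [← LinearMap.comp_apply, ← TensorProduct.map_comp]

lemma aux_headNat (δ : A →ₗ[K] A ⊗[K] A) (f : M →ₗ[K] N) (y : A ⊗[K] M) :
    (TensorProduct.assoc K A A N)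
        (TensorProduct.map δ LinearMap.id (TensorProduct.map LinearMap.id f y))
      = TensorProduct.map LinearMap.id (TensorProduct.map LinearMap.id f)
          ((TensorProduct.assoc K A A M) (TensorProduct.map δ LinearMap.id y)) := by
  induction y using TensorProduct.induction_on with
  | zero => simp
  | tmul a m =>
    simp only [TensorProduct.map_tmul, LinearMap.id_coe, id_eq]
    generalize δ a = w
    induction w using TensorProduct.induction_on with
    | zero => simp
    | tmul u v => simp
    | add w₁ w₂ h₁ h₂ => simp [TensorProduct.add_tmul, h₁, h₂]
  | add p q hp hq => simp [hp, hq]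

lemma aux_map_sum (e : A →ₗ[K] A) (s : Finset ℕ) (g : ℕ → M →ₗ[K] N) (t : A ⊗[K] M) :
    TensorProduct.map e (∑ n ∈ s, g n) t = ∑ n ∈ s, TensorProduct.map e (g n) t := by
  induction t using TensorProduct.induction_on with
  | zero => simp
  | tmul a m => simp [TensorProduct.map_tmul, LinearMap.sum_apply, TensorProduct.tmul_sum]
  | add p q hp hq => simp [hp, hq, Finset.sum_add_distrib]

end MapHelpers

lemma deltaIter_tail (δ : A →ₗ[K] A ⊗[K] A) (hco : IsCoassoc K A δ) :
    ∀ n (x : A), deltaIter K A δ (n + 1) x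
      = TensorProduct.map LinearMap.id (deltaIter K A δ n) (δ x) := by
  intro n
  induction n with
  | zero =>
    intro x
    have h : TensorProduct.map (LinearMap.id : A →ₗ[K] A) (deltaIter K A δ 0)
        = LinearMap.id := by exact TensorProduct.map_id
    exact (DFunLike.congr_fun h (δ x)).symm
  | succ n ih =>
    intro x
    have h1 : deltaIter K A δ (n + 1 + 1) x
        = (TensorProduct.assoc K A A (Tpow K A n))
            (TensorProduct.map δ LinearMap.id (deltaIter K A δ (n + 1) x)) := rfl
    rw [h1, ih x, aux_headNat K A δ (deltaIter K A δ n) (δ x), hco x]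
    have ihm : deltaIter K A δ (n + 1)
        = TensorProduct.map LinearMap.id (deltaIter K A δ n) ∘ₗ δ :=
      LinearMap.ext ih
    have h3 : TensorProduct.map (LinearMap.id : A →ₗ[K] A) (deltaIter K A δ (n + 1)) (δ x)
        = TensorProduct.map LinearMap.id (TensorProduct.map LinearMap.id (deltaIter K A δ n))
            (TensorProduct.map LinearMap.id δ (δ x)) := by
      rw [ihm]
      exact aux_lmap_lmap K δ (TensorProduct.map LinearMap.id (deltaIter K A δ n)) (δ x)
    rw [h3]

lemma auxD_auxF (δ : A →ₗ[K] A ⊗[K] A) :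
    ∀ k (z : Tpow K A k ⊗[K] A),
      auxD K A δ (k + 1) (auxF K A k z)
        = auxF K A (k + 1) (TensorProduct.map (auxD K A δ k) LinearMap.id z) := by
  intro k
  cases k with
  | zero =>
    intro z
    induction z using TensorProduct.induction_on with
    | zero => simp only [map_zero]
    | tmul u v =>
      show (TensorProduct.assoc K A A A) ((δ u) ⊗ₜ[K] v)
          = TensorProduct.map (LinearMap.id : A →ₗ[K] A)
              (LinearMap.id : A ⊗[K] A →ₗ[K] A ⊗[K] A)
              ((TensorProduct.assoc K A A A) ((δ u) ⊗ₜ[K] v))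
      rw [TensorProduct.map_id]
      rfl
    | add z₁ z₂ h₁ h₂ => simp only [map_add, h₁, h₂]
  | succ k =>
    intro z
    induction z using TensorProduct.induction_on with
    | zero => simp only [map_zero]
    | tmul p c =>
      induction p using TensorProduct.induction_on with
      | zero => erw [TensorProduct.zero_tmul]; simp only [map_zero]
      | tmul a t =>
        show (TensorProduct.assoc K A A (Tpow K A (k + 1)))
              ((δ a) ⊗ₜ[K] (auxF K A k (t ⊗ₜ[K] c)))
            = TensorProduct.map LinearMap.id (auxF K A (k + 1))
                ((TensorProduct.assoc K A (Tpow K A (k + 1)) A)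
                  (((TensorProduct.assoc K A A (Tpow K A k)) ((δ a) ⊗ₜ[K] t)) ⊗ₜ[K] c))
        generalize δ a = w
        induction w using TensorProduct.induction_on with
        | zero => simp; erw [TensorProduct.zero_tmul, map_zero]; rfl
        | tmul u v =>
          have hF : auxF K A (k + 1) ((v ⊗ₜ[K] t) ⊗ₜ[K] c)
              = v ⊗ₜ[K] (auxF K A k (t ⊗ₜ[K] c)) := rfl
          rfl
        | add w₁ w₂ h₁ h₂ =>
          simp only [TensorProduct.add_tmul, map_add, h₁, h₂]
          exact (map_add ((TensorProduct.map LinearMap.id (auxF K A (k + 1))) ∘ₗ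
            (TensorProduct.assoc K A (Tpow K A (k + 1)) A).toLinearMap ∘ₗ
            (TensorProduct.mk K (A ⊗[K] Tpow K A (k + 1)) A).flip c ∘ₗ
            ((TensorProduct.assoc K A A (Tpow K A k)).toLinearMap :
              (A ⊗[K] A) ⊗[K] Tpow K A k →ₗ[K] A ⊗[K] Tpow K A (k + 1)) ∘ₗ
            (TensorProduct.mk K (A ⊗[K] A) (Tpow K A k)).flip t) w₁ w₂).symm
      | add p₁ p₂ h₁ h₂ => erw [TensorProduct.add_tmul]; simp only [map_add, h₁, h₂]
    | add z₁ z₂ h₁ h₂ => simp only [map_add, h₁, h₂]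

lemma deltaIter_head (δ : A →ₗ[K] A ⊗[K] A) :
    ∀ n (x : A), deltaIter K A δ (n + 1) x
      = auxF K A n (TensorProduct.map (deltaIter K A δ n) LinearMap.id (δ x)) := by
  intro n
  induction n with
  | zero =>
    intro x
    have h : TensorProduct.map (deltaIter K A δ 0) (LinearMap.id : A →ₗ[K] A)
        = LinearMap.id := by exact TensorProduct.map_id
    rw [h]
    rfl
  | succ n ih =>
    intro x
    rw [deltaIter_succ_apply K A δ (n + 1) x, ih x,
      auxD_auxF K A δ n (TensorProduct.map (deltaIter K A δ n) LinearMap.id (δ x))]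
    congr 1
    have hm : deltaIter K A δ (n + 1) = auxD K A δ n ∘ₗ deltaIter K A δ n :=
      LinearMap.ext (deltaIter_succ_apply K A δ n)
    rw [hm]
    exact (aux_rmap_rmap K (deltaIter K A δ n) (auxD K A δ n) (δ x)).symm

lemma lc_key (k : ℕ) (z : Tpow K A (k + 2) ⊗[K] A) :
    auxF K A (k + 1)
        (TensorProduct.map
          ((TensorProduct.map (TensorProduct.lift (LinearMap.mul K A)) LinearMap.id :
              (A ⊗[K] A) ⊗[K] Tpow K A k →ₗ[K] A ⊗[K] Tpow K A k) ∘ₗ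
            (TensorProduct.assoc K A A (Tpow K A k)).symm.toLinearMap)
          LinearMap.id z)
      = ((TensorProduct.map (TensorProduct.lift (LinearMap.mul K A)) LinearMap.id :
            (A ⊗[K] A) ⊗[K] Tpow K A (k + 1) →ₗ[K] A ⊗[K] Tpow K A (k + 1)) ∘ₗ
          (TensorProduct.assoc K A A (Tpow K A (k + 1))).symm.toLinearMap)
          (auxF K A (k + 2) z) := by
  induction z using TensorProduct.induction_on with
  | zero => erw [map_zero]
  | tmul p c =>
    induction p using TensorProduct.induction_on with
    | zero => erw [TensorProduct.zero_tmul, map_zero]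
    | tmul a q =>
      induction q using TensorProduct.induction_on with
      | zero => erw [TensorProduct.tmul_zero, TensorProduct.zero_tmul, map_zero]
      | tmul b t => rfl
      | add q₁ q₂ h₁ h₂ =>
        exact (map_add ((auxF K A (k + 1) ∘ₗ TensorProduct.map ((TensorProduct.map (TensorProduct.lift (LinearMap.mul K A)) LinearMap.id :
                (A ⊗[K] A) ⊗[K] Tpow K A k →ₗ[K] A ⊗[K] Tpow K A k) ∘ₗ
              (TensorProduct.assoc K A A (Tpow K A k)).symm.toLinearMap) LinearMap.id) ∘ₗ (TensorProduct.mk K (Tpow K A (k + 2)) A).flip c ∘ₗ TensorProduct.mk K A (Tpow K A (k + 1)) a) _ _).trans ((congrArg₂ (· + ·) h₁ h₂).trans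
          (map_add ((((TensorProduct.map (TensorProduct.lift (LinearMap.mul K A)) LinearMap.id :
              (A ⊗[K] A) ⊗[K] Tpow K A (k + 1) →ₗ[K] A ⊗[K] Tpow K A (k + 1)) ∘ₗ
            (TensorProduct.assoc K A A (Tpow K A (k + 1))).symm.toLinearMap) ∘ₗ auxF K A (k + 2)) ∘ₗ (TensorProduct.mk K (Tpow K A (k + 2)) A).flip c ∘ₗ TensorProduct.mk K A (Tpow K A (k + 1)) a) _ _).symm)
    | add p₁ p₂ h₁ h₂ =>
      exact (map_add ((auxF K A (k + 1) ∘ₗ TensorProduct.map ((TensorProduct.map (TensorProduct.lift (LinearMap.mul K A)) LinearMap.id :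
                (A ⊗[K] A) ⊗[K] Tpow K A k →ₗ[K] A ⊗[K] Tpow K A k) ∘ₗ
              (TensorProduct.assoc K A A (Tpow K A k)).symm.toLinearMap) LinearMap.id) ∘ₗ (TensorProduct.mk K (Tpow K A (k + 2)) A).flip c) _ _).trans ((congrArg₂ (· + ·) h₁ h₂).trans
          (map_add ((((TensorProduct.map (TensorProduct.lift (LinearMap.mul K A)) LinearMap.id :
              (A ⊗[K] A) ⊗[K] Tpow K A (k + 1) →ₗ[K] A ⊗[K] Tpow K A (k + 1)) ∘ₗ
            (TensorProduct.assoc K A A (Tpow K A (k + 1))).symm.toLinearMap) ∘ₗ auxF K A (k + 2)) ∘ₗ (TensorProduct.mk K (Tpow K A (k + 2)) A).flip c) _ _).symm)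
  | add z₁ z₂ h₁ h₂ =>
    exact (map_add ((auxF K A (k + 1) ∘ₗ TensorProduct.map ((TensorProduct.map (TensorProduct.lift (LinearMap.mul K A)) LinearMap.id :
                (A ⊗[K] A) ⊗[K] Tpow K A k →ₗ[K] A ⊗[K] Tpow K A k) ∘ₗ
              (TensorProduct.assoc K A A (Tpow K A k)).symm.toLinearMap) LinearMap.id)) _ _).trans ((congrArg₂ (· + ·) h₁ h₂).trans
          (map_add ((((TensorProduct.map (TensorProduct.lift (LinearMap.mul K A)) LinearMap.id :
              (A ⊗[K] A) ⊗[K] Tpow K A (k + 1) →ₗ[K] A ⊗[K] Tpow K A (k + 1)) ∘ₗ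
            (TensorProduct.assoc K A A (Tpow K A (k + 1))).symm.toLinearMap) ∘ₗ auxF K A (k + 2))) _ _).symm)

lemma lc_mul : ∀ k (z : Tpow K A k ⊗[K] A),
    TensorProduct.lift (LinearMap.mul K A)
        (TensorProduct.map (leftCombMap K A k) LinearMap.id z)
      = leftCombMap K A (k + 1) (auxF K A k z) := by
  intro k
  induction k with
  | zero =>
    intro z
    induction z using TensorProduct.induction_on with
    | zero => simp only [map_zero]
    | tmul u v => rfl
    | add z₁ z₂ h₁ h₂ => simp only [map_add, h₁, h₂]
  | succ k ih =>
    cases k with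
    | zero =>
      intro z
      induction z using TensorProduct.induction_on with
      | zero => simp only [map_zero]
      | tmul p c =>
        induction p using TensorProduct.induction_on with
        | zero => erw [TensorProduct.zero_tmul]; simp only [map_zero]
        | tmul a b => rfl
        | add p₁ p₂ h₁ h₂ => erw [TensorProduct.add_tmul]; simp only [map_add, h₁, h₂]
      | add z₁ z₂ h₁ h₂ => simp only [map_add, h₁, h₂]
    | succ k' =>
      intro z
      have hsplit : TensorProduct.map (leftCombMap K A (k' + 1 + 1)) (LinearMap.id : A →ₗ[K] A) z
          = TensorProduct.map (leftCombMap K A (k' + 1)) LinearMap.id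
              (TensorProduct.map
                ((TensorProduct.map (TensorProduct.lift (LinearMap.mul K A)) LinearMap.id :
                    (A ⊗[K] A) ⊗[K] Tpow K A k' →ₗ[K] A ⊗[K] Tpow K A k') ∘ₗ
                  (TensorProduct.assoc K A A (Tpow K A k')).symm.toLinearMap)
                LinearMap.id z) := by
        rw [show leftCombMap K A (k' + 1 + 1)
            = leftCombMap K A (k' + 1) ∘ₗ
                ((TensorProduct.map (TensorProduct.lift (LinearMap.mul K A)) LinearMap.id :
                    (A ⊗[K] A) ⊗[K] Tpow K A k' →ₗ[K] A ⊗[K] Tpow K A k') ∘ₗ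
                  (TensorProduct.assoc K A A (Tpow K A k')).symm.toLinearMap) from rfl]
        exact aux_rmap_rmap K _ (leftCombMap K A (k' + 1)) z
      rw [hsplit]; erw [ih]
      have hlc : ∀ w : Tpow K A (k' + 2 + 1),
          leftCombMap K A (k' + 2 + 1) w
            = leftCombMap K A (k' + 2)
                (((TensorProduct.map (TensorProduct.lift (LinearMap.mul K A)) LinearMap.id :
                      (A ⊗[K] A) ⊗[K] Tpow K A (k' + 1) →ₗ[K] A ⊗[K] Tpow K A (k' + 1)) ∘ₗ
                    (TensorProduct.assoc K A A (Tpow K A (k' + 1))).symm.toLinearMap) w) :=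
        fun w => rfl
      rw [hlc (auxF K A (k' + 2) z)]
      congr 1
      exact lc_key K A k' z

lemma leftcomb_step (δ : A →ₗ[K] A ⊗[K] A) (k : ℕ) (x : A) :
    leftCombMap K A (k + 1) (deltaIter K A δ (k + 1) x)
      = TensorProduct.lift (LinearMap.mul K A)
          (TensorProduct.map (leftCombMap K A k ∘ₗ deltaIter K A δ k) LinearMap.id (δ x)) := by
  rw [deltaIter_head K A δ k x,
    ← lc_mul K A k (TensorProduct.map (deltaIter K A δ k) LinearMap.id (δ x))]
  congr 1
  exact (aux_rmap_rmap K (deltaIter K A δ k) (leftCombMap K A k) (δ x)).symm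

lemma rc_step (δ : A →ₗ[K] A ⊗[K] A) (hco : IsCoassoc K A δ) (e : A →ₗ[K] A) (n : ℕ) (x : A) :
    rightCombMap K A (n + 1) (tensorPowMap K A e (n + 1) (deltaIter K A δ (n + 1) x))
      = TensorProduct.lift (LinearMap.mul K A)
          (TensorProduct.map e
            (rightCombMap K A n ∘ₗ tensorPowMap K A e n ∘ₗ deltaIter K A δ n) (δ x)) := by
  rw [deltaIter_tail K A δ hco n x]
  have h1 : rightCombMap K A (n + 1)
      (tensorPowMap K A e (n + 1)
        (TensorProduct.map LinearMap.id (deltaIter K A δ n) (δ x)))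
      = TensorProduct.lift (LinearMap.mul K A)
          (TensorProduct.map LinearMap.id (rightCombMap K A n)
            (TensorProduct.map e (tensorPowMap K A e n)
              (TensorProduct.map LinearMap.id (deltaIter K A δ n) (δ x)))) := rfl
  rw [h1]
  congr 1
  rw [aux_map_map K (LinearMap.id : A →ₗ[K] A) e (deltaIter K A δ n) (tensorPowMap K A e n)
      (δ x),
    aux_map_map K (e ∘ₗ LinearMap.id) (LinearMap.id : A →ₗ[K] A)
      (tensorPowMap K A e n ∘ₗ deltaIter K A δ n) (rightCombMap K A n) (δ x),
    LinearMap.comp_id, LinearMap.id_comp]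

section Phi

variable {ι : Type*} [DecidableEq ι]

/-- Identification `A ⊗ M ≃ (ι →₀ M)` coming from a basis of `A`. -/
noncomputable def auxPhiL (b : Module.Basis ι K A) (M : Type v) [AddCommGroup M] [Module K M] :
    A ⊗[K] M ≃ₗ[K] (ι →₀ M) :=
  (TensorProduct.congr b.repr (LinearEquiv.refl K M)) ≪≫ₗ
    TensorProduct.finsuppScalarLeft K M ι

/-- Identification `M ⊗ A ≃ (ι →₀ M)` coming from a basis of `A`. -/
noncomputable def auxPhiR (b : Module.Basis ι K A) (M : Type v) [AddCommGroup M] [Module K M] :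
    M ⊗[K] A ≃ₗ[K] (ι →₀ M) :=
  (TensorProduct.congr (LinearEquiv.refl K M) b.repr) ≪≫ₗ
    TensorProduct.finsuppScalarRight K K M ι

lemma auxPhiL_tmul (b : Module.Basis ι K A) (M : Type v) [AddCommGroup M] [Module K M]
    (a : A) (m : M) (i : ι) :
    auxPhiL K A b M (a ⊗ₜ[K] m) i = b.repr a i • m := by
  simp [auxPhiL, TensorProduct.congr_tmul]

lemma auxPhiR_tmul (b : Module.Basis ι K A) (M : Type v) [AddCommGroup M] [Module K M]
    (m : M) (a : A) (i : ι) :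
    auxPhiR K A b M (m ⊗ₜ[K] a) i = b.repr a i • m := by
  simp [auxPhiR, TensorProduct.congr_tmul]

lemma auxPhiL_nat (b : Module.Basis ι K A) {M N : Type v} [AddCommGroup M] [Module K M]
    [AddCommGroup N] [Module K N] (f : M →ₗ[K] N) (t : A ⊗[K] M) (i : ι) :
    auxPhiL K A b N (TensorProduct.map LinearMap.id f t) i = f (auxPhiL K A b M t i) := by
  induction t using TensorProduct.induction_on with
  | zero => simp
  | tmul a m => simp [auxPhiL_tmul, TensorProduct.map_tmul, map_smul]
  | add p q hp hq => simp only [map_add, Finsupp.add_apply, hp, hq]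

lemma auxPhiR_nat (b : Module.Basis ι K A) {M N : Type v} [AddCommGroup M] [Module K M]
    [AddCommGroup N] [Module K N] (f : M →ₗ[K] N) (t : M ⊗[K] A) (i : ι) :
    auxPhiR K A b N (TensorProduct.map f LinearMap.id t) i = f (auxPhiR K A b M t i) := by
  induction t using TensorProduct.induction_on with
  | zero => simp
  | tmul m a => simp [auxPhiR_tmul, TensorProduct.map_tmul, map_smul]
  | add p q hp hq => simp only [map_add, Finsupp.add_apply, hp, hq]

end Phi

set_option maxHeartbeats 2000000 in
/-- Reconstruction: in a conilpotent `As^c`-`Mag` bialgebra, every `x` satisfies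
`x = Σ_{n≥0} ρ^{n+1}(e^{⊗(n+1)}(δⁿ(x)))`, where `e` is the linear map given by
`e(x) = x + Σ_{k≥1} (-1)ᵏ ω^{k+1}(δᵏ(x))` (a finite sum by conilpotency, and the
reconstruction sum is finite: its terms vanish for `n ≥ N` whenever
`δⁿ(x) = 0` for all `n ≥ N`). -/
theorem reconstruction_of_conilpotent
    (δ : A →ₗ[K] A ⊗[K] A) (hui : IsUICoproduct K A δ) (hco : IsCoassoc K A δ)
    (hconil : ∀ x : A, ∃ N : ℕ, ∀ n, N ≤ n → deltaIter K A δ n x = 0)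
    (e : A →ₗ[K] A)
    (he : ∀ (x : A) (N : ℕ), (∀ n, N ≤ n → deltaIter K A δ n x = 0) →
      e x = x + ∑ k ∈ Finset.Icc 1 (N - 1),
        ((-1 : K) ^ k) • leftCombMap K A k (deltaIter K A δ k x)) :
    ∀ (x : A) (N : ℕ), (∀ n, N ≤ n → deltaIter K A δ n x = 0) →
      x = ∑ n ∈ Finset.range N,
        rightCombMap K A n (tensorPowMap K A e n (deltaIter K A δ n x)) := by
  classical
  have hNf : ∀ a : A, ∀ n, (hconil a).choose ≤ n → deltaIter K A δ n a = 0 :=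
    fun a => (hconil a).choose_spec
  set Nf : A → ℕ := fun a => (hconil a).choose with hNfdef
  let b : Module.Basis (Module.Basis.ofVectorSpaceIndex K A) K A := Module.Basis.ofVectorSpace K A
  -- the key identity `e y + m((e ⊗ id)(δ y)) = y`
  have star : ∀ y : A, e y + TensorProduct.lift (LinearMap.mul K A)
      (TensorProduct.map e LinearMap.id (δ y)) = y := by
    intro y
    set c : Module.Basis.ofVectorSpaceIndex K A →₀ A := auxPhiR K A b A (δ y) with hc
    set M : ℕ := max (Nf y) (c.support.sup fun i => Nf (c i)) with hM
    have hMy : ∀ n, M + 1 ≤ n → deltaIter K A δ n y = 0 := by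
      intro n hn
      have h1 : Nf y ≤ M := le_max_left _ _
      exact hNf y n (le_trans h1 (Nat.le_of_succ_le hn))
    have hci : ∀ i, ∀ n, M + 1 ≤ n → deltaIter K A δ n (c i) = 0 := by
      intro i n hn
      by_cases hi : i ∈ c.support
      · have h1 : Nf (c i) ≤ c.support.sup (fun j => Nf (c j)) := Finset.le_sup (f := fun j => Nf (c j)) hi
        have h2 : c.support.sup (fun j => Nf (c j)) ≤ M := le_max_right _ _
        exact hNf (c i) n (le_trans (le_trans h1 h2) (Nat.le_of_succ_le hn))
      · rw [Finsupp.notMem_support_iff.mp hi]; simp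
    set u : ℕ → A := fun k => ((-1 : K) ^ k) • leftCombMap K A k (deltaIter K A δ k y)
      with hu
    have hmap : TensorProduct.map e LinearMap.id (δ y)
        = δ y + ∑ k ∈ Finset.Icc 1 M, ((-1 : K) ^ k) •
            TensorProduct.map (leftCombMap K A k ∘ₗ deltaIter K A δ k) LinearMap.id (δ y) := by
      apply (auxPhiR K A b A).injective
      rw [map_add, map_sum]
      ext i
      rw [Finsupp.add_apply, Finsupp.finset_sum_apply, auxPhiR_nat]
      have hterm : ∀ k ∈ Finset.Icc 1 M,
          (auxPhiR K A b A (((-1 : K) ^ k) •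
            TensorProduct.map (leftCombMap K A k ∘ₗ deltaIter K A δ k) LinearMap.id (δ y))) i
          = ((-1 : K) ^ k) • leftCombMap K A k (deltaIter K A δ k (c i)) := by
        intro k _
        rw [map_smul, Finsupp.smul_apply, auxPhiR_nat]
        have : (leftCombMap K A k ∘ₗ deltaIter K A δ k) (auxPhiR K A b A (δ y) i)
            = leftCombMap K A k (deltaIter K A δ k (auxPhiR K A b A (δ y) i)) := rfl
        rw [this, ← hc]
      rw [Finset.sum_congr rfl hterm]
      have hhe := he (c i) (M + 1) (hci i)
      simp only [Nat.add_sub_cancel] at hhe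
      exact hhe
    have hey := he y (M + 1) hMy
    simp only [Nat.add_sub_cancel] at hey
    have h1' : TensorProduct.lift (LinearMap.mul K A) (δ y) = -(u 1) := by
      rw [hu]
      show _ = -((-1 : K) ^ 1 • leftCombMap K A 1 (deltaIter K A δ 1 y))
      rw [pow_one, neg_smul, one_smul, neg_neg]
      rfl
    have h2 : ∀ k ∈ Finset.Icc 1 M, TensorProduct.lift (LinearMap.mul K A)
        (((-1 : K) ^ k) •
          TensorProduct.map (leftCombMap K A k ∘ₗ deltaIter K A δ k) LinearMap.id (δ y))
        = -(u (k + 1)) := by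
      intro k _
      rw [map_smul, ← leftcomb_step K A δ k y]
      rw [hu]
      show _ = -((-1 : K) ^ (k + 1) • leftCombMap K A (k + 1) (deltaIter K A δ (k + 1) y))
      rw [pow_succ, mul_smul, neg_one_smul, smul_neg, neg_neg]
    rw [hey, hmap, map_add, map_sum, Finset.sum_congr rfl h2, h1']
    have hconv1 : ∑ k ∈ Finset.Icc 1 M, ((-1 : K) ^ k) •
        leftCombMap K A k (deltaIter K A δ k y) = ∑ j ∈ Finset.range M, u (j + 1) := by
      rw [show (Finset.Icc 1 M) = Finset.Ico 1 (M + 1) from (Finset.Ico_add_one_right_eq_Icc 1 M),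
        Finset.sum_Ico_eq_sum_range]
      simp only [Nat.add_sub_cancel]
      exact Finset.sum_congr rfl (fun j _ => by rw [hu, Nat.add_comm])
    have hconv2 : ∑ k ∈ Finset.Icc 1 M, -(u (k + 1)) = -∑ j ∈ Finset.range M, u (j + 2) := by
      have hre : ∑ k ∈ Finset.Icc 1 M, u (k + 1) = ∑ j ∈ Finset.range M, u (j + 2) := by
        rw [show (Finset.Icc 1 M) = Finset.Ico 1 (M + 1) from (Finset.Ico_add_one_right_eq_Icc 1 M),
          Finset.sum_Ico_eq_sum_range]
        simp only [Nat.add_sub_cancel]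
        exact Finset.sum_congr rfl (fun j _ => by rw [show 1 + j + 1 = j + 2 by omega])
      rw [Finset.sum_neg_distrib, hre]
    rw [hconv1, hconv2]
    have e1 : ∑ j ∈ Finset.range (M + 1), u (j + 1)
        = (∑ j ∈ Finset.range M, u (j + 2)) + u 1 :=
      Finset.sum_range_succ' (fun j => u (j + 1)) M
    have e2 : ∑ j ∈ Finset.range (M + 1), u (j + 1)
        = (∑ j ∈ Finset.range M, u (j + 1)) + u (M + 1) := Finset.sum_range_succ _ M
    have hzM : u (M + 1) = 0 := by
      rw [hu]
      show ((-1 : K) ^ (M + 1)) • leftCombMap K A (M + 1) (deltaIter K A δ (M + 1) y) = 0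
      rw [hMy (M + 1) le_rfl, map_zero, smul_zero]
    have hfin : ∑ j ∈ Finset.range M, u (j + 1)
        = u 1 + ∑ j ∈ Finset.range M, u (j + 2) := by
      rw [e2, hzM, add_zero] at e1
      rw [e1]; abel
    rw [hfin]
    abel
  intro x N
  induction N generalizing x with
  | zero =>
    intro hx
    have h0 : x = 0 := by
      have := hx 0 le_rfl
      rwa [show deltaIter K A δ 0 x = x from rfl] at this
    simp [h0]
  | succ N ih =>
    intro hx
    set QN : A →ₗ[K] A :=
      ∑ n ∈ Finset.range N,
        (rightCombMap K A n ∘ₗ tensorPowMap K A e n ∘ₗ deltaIter K A δ n) with hQN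
    have hQsum : ∀ y : A, QN y
        = ∑ n ∈ Finset.range N,
            rightCombMap K A n (tensorPowMap K A e n (deltaIter K A δ n y)) := by
      intro y
      rw [hQN, LinearMap.sum_apply]
      exact Finset.sum_congr rfl (fun n _ => rfl)
    have hfix : TensorProduct.map LinearMap.id QN (δ x) = δ x := by
      apply (auxPhiL K A b A).injective
      ext i
      rw [auxPhiL_nat]
      set ci := auxPhiL K A b A (δ x) i with hcidef
      have hcin : ∀ n, N ≤ n → deltaIter K A δ n ci = 0 := by
        intro n hn
        have hnat := auxPhiL_nat K A b (deltaIter K A δ n) (δ x) i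
        rw [hcidef, ← hnat, ← deltaIter_tail K A δ hco n x, hx (n + 1) (by omega)]
        erw [map_zero, Finsupp.zero_apply]
      have := ih ci hcin
      rw [← hQsum ci] at this
      exact this.symm
    rw [Finset.sum_range_succ']
    have hP : ∀ n ∈ Finset.range N,
        rightCombMap K A (n + 1) (tensorPowMap K A e (n + 1) (deltaIter K A δ (n + 1) x))
        = TensorProduct.lift (LinearMap.mul K A)
            (TensorProduct.map e
              (rightCombMap K A n ∘ₗ tensorPowMap K A e n ∘ₗ deltaIter K A δ n) (δ x)) :=
      fun n _ => rc_step K A δ hco e n x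
    rw [Finset.sum_congr rfl hP]
    have hsum2 : ∑ n ∈ Finset.range N, TensorProduct.lift (LinearMap.mul K A)
        (TensorProduct.map e
          (rightCombMap K A n ∘ₗ tensorPowMap K A e n ∘ₗ deltaIter K A δ n) (δ x))
        = TensorProduct.lift (LinearMap.mul K A) (TensorProduct.map e QN (δ x)) := by
      rw [← map_sum]
      congr 1
      rw [hQN, aux_map_sum]
    rw [hsum2]
    have hP0 : rightCombMap K A 0 (tensorPowMap K A e 0 (deltaIter K A δ 0 x)) = e x := rfl
    rw [hP0]
    have hsplit : TensorProduct.map e QN (δ x)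
        = TensorProduct.map e LinearMap.id (TensorProduct.map LinearMap.id QN (δ x)) := by
      rw [aux_map_map K (LinearMap.id : A →ₗ[K] A) e QN (LinearMap.id : A →ₗ[K] A) (δ x),
        LinearMap.comp_id, LinearMap.id_comp]
    rw [hsplit, hfix]
    exact ((star x).symm.trans (add_comm _ _))
end

section
/- Let A be a magmatic algebra over a field K with a coassociative reduced unital-infinitesimal coproduct δ, and suppose A is conilpotent: for every x ∈ A there exists N with δⁿ(x) = 0 for all n ≥ N. Then the K-linear map α : A → ⨁_{n≥1} A^{⊗n} whose n-th component is e^{⊗n} ∘ δ^{n−1} (with δ⁰ = id) is injective, and its image equals ⨁_{n≥1} (Prim A)^{⊗n}, where (Prim A)^{⊗n} denotes the image in A^{⊗n} of the n-fold tensor power of the inclusion of the subspace Prim A = ker δ. -/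
open TensorProduct DirectSum

universe u v

variable (K : Type u) [Field K] (A : Type v) [NonUnitalNonAssocRing A]
  [Module K A] [SMulCommClass K A A] [IsScalarTower K A A]

/-- The submodule `(Prim A)^{⊗(n+1)}` of `A^{⊗(n+1)}`, the image of the tensor power
of the inclusion of the subspace of primitives `Prim A = ker δ`. -/
noncomputable def primPow (δ : A →ₗ[K] A ⊗[K] A) : (n : ℕ) → Submodule K (Tpow K A n)
  | 0 => LinearMap.ker δ
  | n + 1 =>
    LinearMap.range (TensorProduct.mapIncl (LinearMap.ker δ) (primPow δ n))

/-! ### Auxiliary material -/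

section Aux

set_option linter.unusedSectionVars false

lemma sum_Icc_one_eq {β : Type*} [AddCommMonoid β] (f : ℕ → β) (M : ℕ) :
    ∑ k ∈ Finset.Icc 1 M, f k = ∑ j ∈ Finset.range M, f (j + 1) := by
  rw [← Finset.Ico_add_one_right_eq_Icc, Finset.sum_Ico_eq_sum_range]
  simp [add_comm]

/-- The canonical isomorphism `A^{⊗(n+1)} ⊗ A ≃ A^{⊗(n+2)}`. -/
noncomputable def shiftIso : (n : ℕ) → (Tpow K A n ⊗[K] A) ≃ₗ[K] Tpow K A (n + 1)
  | 0 => LinearEquiv.refl K (A ⊗[K] A)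
  | n + 1 =>
    (TensorProduct.assoc K A (Tpow K A n) A) ≪≫ₗ
      (TensorProduct.congr (LinearEquiv.refl K A) (shiftIso n))

lemma shiftIso_zero_apply (z : A ⊗[K] A) : shiftIso K A 0 z = z := rfl

lemma shiftIso_succ_tmul (n : ℕ) (a : A) (u : Tpow K A n) (b : A) :
    shiftIso K A (n + 1) ((a ⊗ₜ[K] u) ⊗ₜ[K] b) = a ⊗ₜ[K] shiftIso K A n (u ⊗ₜ[K] b) := rfl

variable {A} in
lemma deltaIter_zero_apply (δ : A →ₗ[K] A ⊗[K] A) (x : A) : deltaIter K A δ 0 x = x := rfl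

variable {A} in
lemma deltaIter_one (δ : A →ₗ[K] A ⊗[K] A) : deltaIter K A δ 1 = δ := rfl

variable {A} in
lemma deltaIter_succ_succ (δ : A →ₗ[K] A ⊗[K] A) (n : ℕ) :
    deltaIter K A δ (n + 2) =
      (TensorProduct.assoc K A A (Tpow K A n)).toLinearMap
        ∘ₗ (TensorProduct.map δ LinearMap.id :
              A ⊗[K] Tpow K A n →ₗ[K] (A ⊗[K] A) ⊗[K] Tpow K A n)
        ∘ₗ deltaIter K A δ (n + 1) := rfl

variable {A} in
lemma deltaIter_eq_zero_of_le (δ : A →ₗ[K] A ⊗[K] A) {x : A} {k : ℕ} (hk : 1 ≤ k)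
    (h : deltaIter K A δ k x = 0) : ∀ m, k ≤ m → deltaIter K A δ m x = 0 := by
  intro m hm
  induction m with
  | zero => omega
  | succ m ih =>
    rcases eq_or_lt_of_le hm with rfl | h'
    · exact h
    · have hm' : k ≤ m := by omega
      have h0 := ih hm'
      obtain ⟨m', rfl⟩ : ∃ m', m = m' + 1 := ⟨m - 1, by omega⟩
      have hrw : deltaIter K A δ (m' + 1 + 1) x
          = (TensorProduct.assoc K A A (Tpow K A m')).toLinearMap
              ((TensorProduct.map δ LinearMap.id) (deltaIter K A δ (m' + 1) x)) := rfl
      erw [hrw, h0, map_zero]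
      exact rfl

section Decomp

variable {M : Type*} [AddCommGroup M] [Module K M]

variable {K A} in
lemma kill_right {ι : Type*} (B : Module.Basis ι K A) (s : Finset ι) (f : ι → M)
    (h : ∑ i ∈ s, f i ⊗ₜ[K] B i = (0 : M ⊗[K] A)) : ∀ i ∈ s, f i = 0 := by
  classical
  intro i hi
  have h2 := congrArg
    (fun t => (TensorProduct.rid K M) ((LinearMap.lTensor M (B.coord i)) t)) h
  simp only [map_sum, LinearMap.lTensor_tmul, TensorProduct.rid_tmul, map_zero,
    Module.Basis.coord_apply, Module.Basis.repr_self_apply, ite_smul, one_smul,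
    zero_smul, Finset.sum_ite_eq', if_pos hi] at h2
  exact h2

variable {K A} in
lemma kill_left {ι : Type*} (B : Module.Basis ι K A) (s : Finset ι) (f : ι → M)
    (h : ∑ i ∈ s, B i ⊗ₜ[K] f i = (0 : A ⊗[K] M)) : ∀ i ∈ s, f i = 0 := by
  classical
  intro i hi
  have h2 := congrArg
    (fun t => (TensorProduct.lid K M) ((LinearMap.rTensor M (B.coord i)) t)) h
  simp only [map_sum, LinearMap.rTensor_tmul, TensorProduct.lid_tmul, map_zero,
    Module.Basis.coord_apply, Module.Basis.repr_self_apply, ite_smul, one_smul,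
    zero_smul, Finset.sum_ite_eq', if_pos hi] at h2
  exact h2

variable {K A} in
lemma exists_decomp_right (t : M ⊗[K] A) :
    ∃ (s : Finset (Module.Basis.ofVectorSpaceIndex K A))
      (f : Module.Basis.ofVectorSpaceIndex K A → M),
      t = ∑ i ∈ s, f i ⊗ₜ[K] (Module.Basis.ofVectorSpace K A) i := by
  set B := Module.Basis.ofVectorSpace K A with hB
  induction t with
  | zero => exact ⟨∅, fun _ => 0, by simp⟩
  | tmul m a =>
    refine ⟨(B.repr a).support, fun i => (B.repr a) i • m, ?_⟩
    have ha : (∑ i ∈ (B.repr a).support, (B.repr a) i • B i) = a := by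
      conv_rhs => rw [← B.linearCombination_repr a]
      rfl
    calc m ⊗ₜ[K] a = m ⊗ₜ[K] (∑ i ∈ (B.repr a).support, (B.repr a) i • B i) := by rw [ha]
    _ = ∑ i ∈ (B.repr a).support, ((B.repr a) i • m) ⊗ₜ[K] B i := by
        rw [TensorProduct.tmul_sum]
        exact Finset.sum_congr rfl fun i _ => by
          rw [TensorProduct.tmul_smul, TensorProduct.smul_tmul']
  | add x y hx hy =>
    obtain ⟨s₁, f₁, rfl⟩ := hx
    obtain ⟨s₂, f₂, rfl⟩ := hy
    classical
    refine ⟨s₁ ∪ s₂,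
      fun i => (if i ∈ s₁ then f₁ i else 0) + (if i ∈ s₂ then f₂ i else 0), ?_⟩
    have : ∀ (s : Finset (Module.Basis.ofVectorSpaceIndex K A)) (f : _ → M), s ⊆ s₁ ∪ s₂ →
        ∑ i ∈ s, f i ⊗ₜ[K] B i
          = ∑ i ∈ s₁ ∪ s₂, (if i ∈ s then f i else 0) ⊗ₜ[K] B i := by
      intro s f hs
      rw [Finset.sum_congr rfl (fun i _ => TensorProduct.ite_tmul _ _ _),
        Finset.sum_ite_mem, Finset.inter_comm, Finset.inter_eq_left.mpr hs]
    rw [this s₁ f₁ Finset.subset_union_left, this s₂ f₂ Finset.subset_union_right,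
      ← Finset.sum_add_distrib]
    exact Finset.sum_congr rfl fun i _ => (TensorProduct.add_tmul _ _ _).symm

variable {K A} in
lemma exists_decomp_left (t : A ⊗[K] M) :
    ∃ (s : Finset (Module.Basis.ofVectorSpaceIndex K A))
      (f : Module.Basis.ofVectorSpaceIndex K A → M),
      t = ∑ i ∈ s, (Module.Basis.ofVectorSpace K A) i ⊗ₜ[K] f i := by
  set B := Module.Basis.ofVectorSpace K A with hB
  induction t with
  | zero => exact ⟨∅, fun _ => 0, by simp⟩
  | tmul a m =>
    refine ⟨(B.repr a).support, fun i => (B.repr a) i • m, ?_⟩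
    have ha : (∑ i ∈ (B.repr a).support, (B.repr a) i • B i) = a := by
      conv_rhs => rw [← B.linearCombination_repr a]
      rfl
    calc a ⊗ₜ[K] m = (∑ i ∈ (B.repr a).support, (B.repr a) i • B i) ⊗ₜ[K] m := by rw [ha]
    _ = ∑ i ∈ (B.repr a).support, B i ⊗ₜ[K] ((B.repr a) i • m) := by
        rw [TensorProduct.sum_tmul]
        exact Finset.sum_congr rfl fun i _ => by
          rw [TensorProduct.smul_tmul]
  | add x y hx hy =>
    obtain ⟨s₁, f₁, rfl⟩ := hx
    obtain ⟨s₂, f₂, rfl⟩ := hy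
    classical
    refine ⟨s₁ ∪ s₂,
      fun i => (if i ∈ s₁ then f₁ i else 0) + (if i ∈ s₂ then f₂ i else 0), ?_⟩
    have : ∀ (s : Finset (Module.Basis.ofVectorSpaceIndex K A)) (f : _ → M), s ⊆ s₁ ∪ s₂ →
        ∑ i ∈ s, B i ⊗ₜ[K] f i
          = ∑ i ∈ s₁ ∪ s₂, B i ⊗ₜ[K] (if i ∈ s then f i else 0) := by
      intro s f hs
      rw [Finset.sum_congr rfl (fun i _ => TensorProduct.tmul_ite _ _ _),
        Finset.sum_ite_mem, Finset.inter_comm, Finset.inter_eq_left.mpr hs]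
    rw [this s₁ f₁ Finset.subset_union_left, this s₂ f₂ Finset.subset_union_right,
      ← Finset.sum_add_distrib]
    exact Finset.sum_congr rfl fun i _ => (TensorProduct.tmul_add _ _ _).symm

end Decomp

section MoreAux

variable {M N : Type v} [AddCommGroup M] [Module K M] [AddCommGroup N] [Module K N]

variable {A} in
lemma assoc_tmul_lTensor (g : M →ₗ[K] N) (u : A ⊗[K] A) (v : M) :
    (TensorProduct.assoc K A A N) (u ⊗ₜ[K] g v)
      = LinearMap.lTensor A (LinearMap.lTensor A g)
          ((TensorProduct.assoc K A A M) (u ⊗ₜ[K] v)) := by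
  induction u with
  | zero => simp
  | tmul p q => simp
  | add u₁ u₂ h₁ h₂ => simp [TensorProduct.add_tmul, h₁, h₂]

variable {A} in
lemma assoc_map_first_tmul (f : A →ₗ[K] A) (t : A ⊗[K] A) (v : M) :
    (TensorProduct.assoc K A A M) ((TensorProduct.map f LinearMap.id t) ⊗ₜ[K] v)
      = TensorProduct.map f LinearMap.id ((TensorProduct.assoc K A A M) (t ⊗ₜ[K] v)) := by
  induction t with
  | zero => simp
  | tmul p q => simp
  | add t₁ t₂ h₁ h₂ => simp [TensorProduct.add_tmul, h₁, h₂]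

variable {A} in
lemma deltaIter_succ_eq_lTensor (δ : A →ₗ[K] A ⊗[K] A) (hco : IsCoassoc K A δ) :
    ∀ (n : ℕ) (x : A),
      deltaIter K A δ (n + 1) x = LinearMap.lTensor A (deltaIter K A δ n) (δ x) := by
  intro n
  induction n with
  | zero =>
    intro x
    have h0 : deltaIter K A δ 0 = LinearMap.id := rfl
    erw [h0, LinearMap.lTensor_id]
    rfl
  | succ n ih =>
    intro x
    have hmap : deltaIter K A δ (n + 1) = (LinearMap.lTensor A (deltaIter K A δ n)) ∘ₗ δ :=
      LinearMap.ext ih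
    have h2 : deltaIter K A δ (n + 2) x
        = (TensorProduct.assoc K A A (Tpow K A n))
            ((TensorProduct.map δ LinearMap.id) (deltaIter K A δ (n + 1) x)) := rfl
    rw [h2, ih x]
    have G1 : ∀ t : A ⊗[K] A,
        (TensorProduct.assoc K A A (Tpow K A n))
            ((TensorProduct.map δ LinearMap.id) (LinearMap.lTensor A (deltaIter K A δ n) t))
          = LinearMap.lTensor A (LinearMap.lTensor A (deltaIter K A δ n))
              ((TensorProduct.assoc K A A A) ((TensorProduct.map δ LinearMap.id) t)) := by
      intro t
      induction t with
      | zero => simp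
      | tmul a b =>
        simp only [LinearMap.lTensor_tmul, TensorProduct.map_tmul, LinearMap.id_coe, id_eq]
        exact assoc_tmul_lTensor K (deltaIter K A δ n) (δ a) b
      | add t₁ t₂ h₁ h₂ => simp only [map_add, h₁, h₂]
    rw [G1 (δ x), hco x]
    have hh : TensorProduct.map (LinearMap.id : A →ₗ[K] A) δ = LinearMap.lTensor A δ := rfl
    rw [hmap, hh, ← LinearMap.lTensor_comp_apply]
    rfl

variable {A} in
lemma leftCombMap_tmul_s14 (n : ℕ) (a : A) (z : A ⊗[K] Tpow K A n) :
    leftCombMap K A (n + 2) (a ⊗ₜ[K] z)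
      = leftCombMap K A (n + 1)
          (TensorProduct.map (LinearMap.mulLeft K a) LinearMap.id z) := by
  have hdef : leftCombMap K A (n + 2) (a ⊗ₜ[K] z) = leftCombMap K A (n + 1)
      ((TensorProduct.map (TensorProduct.lift (LinearMap.mul K A)) LinearMap.id)
        ((TensorProduct.assoc K A A (Tpow K A n)).symm (a ⊗ₜ[K] z))) := rfl
  have harg : ∀ z : A ⊗[K] Tpow K A n,
      (TensorProduct.map (TensorProduct.lift (LinearMap.mul K A)) LinearMap.id)
        ((TensorProduct.assoc K A A (Tpow K A n)).symm (a ⊗ₜ[K] z))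
      = TensorProduct.map (LinearMap.mulLeft K a) LinearMap.id z := by
    intro z
    induction z with
    | zero => simp
    | tmul x w => simp
    | add z₁ z₂ h₁ h₂ => simp [TensorProduct.tmul_add, h₁, h₂]
  exact hdef.trans (congrArg _ (harg z))

variable {A} in
lemma leftCombMap_shiftIso : ∀ (n : ℕ) (u : Tpow K A n) (b : A),
    leftCombMap K A (n + 1) (shiftIso K A n (u ⊗ₜ[K] b)) = leftCombMap K A n u * b := by
  intro n
  induction n with
  | zero =>
    intro u b
    erw [shiftIso_zero_apply]
    rfl
  | succ m ihm =>
    intro u b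
    revert u
    change ∀ u : A ⊗[K] Tpow K A m, _
    intro u
    refine TensorProduct.induction_on (R := K) (M := A) (N := Tpow K A m) u
      ?_ (fun a v => ?_) (fun u₁ u₂ h₁ h₂ => ?_)
    · erw [TensorProduct.zero_tmul, map_zero, zero_mul]
    swap
    · erw [TensorProduct.add_tmul, map_add, map_add, h₁, h₂, map_add, add_mul]
    · erw [shiftIso_succ_tmul]
      erw [leftCombMap_tmul_s14 K m a (shiftIso K A m (v ⊗ₜ[K] b))]
      cases m with
      | zero => rfl
      | succ m' =>
        revert v
        change ∀ v : A ⊗[K] Tpow K A m', _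
        intro v
        refine TensorProduct.induction_on (R := K) (M := A) (N := Tpow K A m') v
          ?_ (fun c w => ?_) (fun v₁ v₂ g₁ g₂ => ?_)
        · erw [TensorProduct.zero_tmul, map_zero, zero_mul]
        swap
        · erw [TensorProduct.add_tmul, map_add, map_add, map_add, g₁, g₂]
          erw [TensorProduct.tmul_add, map_add, add_mul]
        · erw [shiftIso_succ_tmul]
          simp only [TensorProduct.map_tmul, LinearMap.mulLeft_apply, LinearMap.id_apply]
          erw [← shiftIso_succ_tmul, ihm ((a * c) ⊗ₜ[K] w) b,
            leftCombMap_tmul_s14 K m' a (c ⊗ₜ[K] w)]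

variable {A} in
lemma deltaIter_mul_prim (δ : A →ₗ[K] A ⊗[K] A) (hui : IsUICoproduct K A δ)
    {a : A} (ha : δ a = 0) (y : A) :
    ∀ j : ℕ, deltaIter K A δ (j + 1) (a * y)
      = (TensorProduct.map (LinearMap.mulLeft K a) LinearMap.id :
            A ⊗[K] Tpow K A j →ₗ[K] A ⊗[K] Tpow K A j) (deltaIter K A δ (j + 1) y)
        + a ⊗ₜ[K] deltaIter K A δ j y := by
  intro j
  induction j with
  | zero =>
    have := hui a y
    rw [ha, map_zero, zero_add] at this
    exact this
  | succ j ih =>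
    have h2 : ∀ z : A, deltaIter K A δ (j + 2) z
        = (TensorProduct.assoc K A A (Tpow K A j))
            ((TensorProduct.map δ LinearMap.id) (deltaIter K A δ (j + 1) z)) := fun _ => rfl
    have hz : (TensorProduct.assoc K A A (Tpow K A j))
        ((TensorProduct.map δ LinearMap.id) (a ⊗ₜ[K] deltaIter K A δ j y)) = 0 := by
      rw [TensorProduct.map_tmul, ha, TensorProduct.zero_tmul, map_zero]
    have key : ∀ W : A ⊗[K] Tpow K A j,
        (TensorProduct.assoc K A A (Tpow K A j))
            ((TensorProduct.map δ LinearMap.id)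
              ((TensorProduct.map (LinearMap.mulLeft K a) LinearMap.id :
                  A ⊗[K] Tpow K A j →ₗ[K] A ⊗[K] Tpow K A j) W))
          = (TensorProduct.map (LinearMap.mulLeft K a) LinearMap.id :
                A ⊗[K] (A ⊗[K] Tpow K A j) →ₗ[K] A ⊗[K] (A ⊗[K] Tpow K A j))
              ((TensorProduct.assoc K A A (Tpow K A j))
                ((TensorProduct.map δ LinearMap.id) W))
            + a ⊗ₜ[K] W := by
      intro W
      induction W with
      | zero => simp only [map_zero, TensorProduct.tmul_zero, add_zero]
      | add W₁ W₂ g₁ g₂ =>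
        simp only [map_add, g₁, g₂, TensorProduct.tmul_add]
        abel
      | tmul u v =>
        simp only [TensorProduct.map_tmul, LinearMap.mulLeft_apply, LinearMap.id_apply]
        rw [hui a u, ha, map_zero, zero_add, TensorProduct.add_tmul, map_add,
          assoc_map_first_tmul, TensorProduct.assoc_tmul]
    rw [h2 (a * y), ih, map_add, map_add, hz, add_zero,
      key (deltaIter K A δ (j + 1) y), ← h2 y]
    rfl

variable {A} in
lemma shiftIso_one_eq (y : (A ⊗[K] A) ⊗[K] A) :
    shiftIso K A 1 y = TensorProduct.assoc K A A A y := by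
  induction y with
  | zero => exact map_zero _
  | add y₁ y₂ h₁ h₂ => erw [map_add, map_add, h₁, h₂]; exact rfl
  | tmul u b =>
    induction u with
    | zero => erw [TensorProduct.zero_tmul, map_zero]
    | add u₁ u₂ h₁ h₂ => erw [TensorProduct.add_tmul, map_add, map_add, h₁, h₂]; exact rfl
    | tmul p q =>
      erw [shiftIso_succ_tmul, shiftIso_zero_apply]

variable {A} in
lemma assoc_tmul_shiftIso (m : ℕ) (u : A ⊗[K] A) (v : Tpow K A m) (b : A) :
    (TensorProduct.assoc K A A (Tpow K A (m + 1)))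
        (u ⊗ₜ[K] shiftIso K A m (v ⊗ₜ[K] b))
      = shiftIso K A (m + 2)
          (((TensorProduct.assoc K A A (Tpow K A m)) (u ⊗ₜ[K] v)) ⊗ₜ[K] b) := by
  induction u with
  | zero => erw [TensorProduct.zero_tmul, TensorProduct.zero_tmul, map_zero]
  | add u₁ u₂ h₁ h₂ =>
    erw [TensorProduct.add_tmul, TensorProduct.add_tmul, map_add, map_add, h₁, h₂,
      TensorProduct.add_tmul, map_add]
    exact rfl
  | tmul p q =>
    erw [TensorProduct.assoc_tmul]

variable {A} in
lemma dStep_shiftIso (δ : A →ₗ[K] A ⊗[K] A) (m : ℕ) (y : Tpow K A (m + 1) ⊗[K] A) :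
    (TensorProduct.assoc K A A (Tpow K A (m + 1)))
        ((TensorProduct.map δ LinearMap.id) (shiftIso K A (m + 1) y))
      = shiftIso K A (m + 2)
          (LinearMap.rTensor A
            ((TensorProduct.assoc K A A (Tpow K A m)).toLinearMap
              ∘ₗ (TensorProduct.map δ LinearMap.id :
                    A ⊗[K] Tpow K A m →ₗ[K] (A ⊗[K] A) ⊗[K] Tpow K A m)) y) := by
  induction y with
  | zero => erw [map_zero]
  | add y₁ y₂ h₁ h₂ => erw [map_add, map_add, map_add, map_add, map_add, h₁, h₂]; exact rfl
  | tmul w b =>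
    revert w
    change ∀ w : A ⊗[K] Tpow K A m, _
    intro w
    refine TensorProduct.induction_on (R := K) (M := A) (N := Tpow K A m) w
      ?_ (fun a v => ?_) (fun w₁ w₂ h₁ h₂ => ?_)
    · erw [TensorProduct.zero_tmul, map_zero]
    · erw [shiftIso_succ_tmul]
      rw [TensorProduct.map_tmul]
      change _ = shiftIso K A (m + 2)
        ((((TensorProduct.assoc K A A (Tpow K A m)).toLinearMap
          ∘ₗ (TensorProduct.map δ LinearMap.id :
                A ⊗[K] Tpow K A m →ₗ[K] (A ⊗[K] A) ⊗[K] Tpow K A m)) (a ⊗ₜ[K] v)) ⊗ₜ[K] b)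
      rw [LinearMap.comp_apply, TensorProduct.map_tmul]
      have h3 : (LinearMap.id : Tpow K A (m+1) →ₗ[K] Tpow K A (m+1))
          (shiftIso K A m (v ⊗ₜ[K] b)) = shiftIso K A m (v ⊗ₜ[K] b) := rfl
      erw [h3]
      exact assoc_tmul_shiftIso K m (δ a) v b
    · erw [TensorProduct.add_tmul, map_add, map_add, map_add, map_add, map_add, h₁, h₂]
      exact rfl

variable {A} in
lemma deltaIter_back (δ : A →ₗ[K] A ⊗[K] A) :
    ∀ (n : ℕ) (x : A),
      deltaIter K A δ (n + 1) x
        = shiftIso K A n (LinearMap.rTensor A (deltaIter K A δ n) (δ x)) := by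
  intro n
  induction n with
  | zero =>
    intro x
    have h0 : deltaIter K A δ 0 = LinearMap.id := rfl
    erw [h0, LinearMap.rTensor_id]
    rfl
  | succ m ihm =>
    intro x
    have h2 : deltaIter K A δ (m + 2) x
        = (TensorProduct.assoc K A A (Tpow K A m))
            ((TensorProduct.map δ LinearMap.id) (deltaIter K A δ (m + 1) x)) := rfl
    cases m with
    | zero =>
      erw [h2, shiftIso_one_eq]
      rfl
    | succ m' =>
      rw [h2, ihm x, dStep_shiftIso K δ m']
      have h4 : ∀ y : A ⊗[K] A,
          LinearMap.rTensor A
            ((TensorProduct.assoc K A A (Tpow K A m')).toLinearMap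
              ∘ₗ (TensorProduct.map δ LinearMap.id :
                    A ⊗[K] Tpow K A m' →ₗ[K] (A ⊗[K] A) ⊗[K] Tpow K A m'))
            (LinearMap.rTensor A (deltaIter K A δ (m' + 1)) y)
          = LinearMap.rTensor A (deltaIter K A δ (m' + 2)) y := by
        intro y
        induction y with
        | zero => exact map_zero _
        | add y₁ y₂ h₁ h₂ => erw [map_add, map_add, map_add, h₁, h₂]; exact rfl
        | tmul a c => rfl
      rw [h4 (δ x)]

section ELemmas

variable {A}
variable (δ : A →ₗ[K] A ⊗[K] A) (e : A →ₗ[K] A)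

variable (A) in
/-- Shorthand for the `he` hypothesis of the main theorem. -/
def HeHyp : Prop :=
  ∀ (x : A) (N : ℕ), (∀ n, N ≤ n → deltaIter K A δ n x = 0) →
    e x = x + ∑ k ∈ Finset.Icc 1 (N - 1),
      ((-1 : K) ^ k) • leftCombMap K A k (deltaIter K A δ k x)

variable (A) in
/-- Shorthand for the conilpotency hypothesis of the main theorem. -/
def ConilHyp : Prop :=
  ∀ x : A, ∃ N : ℕ, ∀ n, N ≤ n → deltaIter K A δ n x = 0

lemma e_fix (he : HeHyp K A δ e) {x : A} (hx : δ x = 0) : e x = x := by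
  have h1 : ∀ n, 1 ≤ n → deltaIter K A δ n x = 0 :=
    deltaIter_eq_zero_of_le K δ le_rfl (by rw [deltaIter_one]; exact hx)
  rw [he x 1 h1]
  simp

lemma e_recursion (hconil : ConilHyp K A δ) (he : HeHyp K A δ e) (x : A) :
    TensorProduct.lift (LinearMap.mul K A) (LinearMap.rTensor A e (δ x)) = x - e x := by
  classical
  obtain ⟨N₀, hN₀⟩ := hconil x
  set B := Module.Basis.ofVectorSpace K A with hBdef
  obtain ⟨s, f, hsf⟩ := exists_decomp_right (δ x)
  have hvan : ∀ n, N₀ + 2 ≤ n → deltaIter K A δ n x = 0 := fun n hn => hN₀ n (by omega)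
  have hfi : ∀ n, N₀ + 1 ≤ n → ∀ i ∈ s, deltaIter K A δ n (f i) = 0 := by
    intro n hn i hi
    have h1 : deltaIter K A δ (n + 1) x = 0 := hN₀ (n + 1) (by omega)
    rw [deltaIter_back K δ n x] at h1
    have h2 : LinearMap.rTensor A (deltaIter K A δ n) (δ x) = 0 :=
      (LinearEquiv.map_eq_zero_iff (shiftIso K A n)).mp h1
    rw [hsf, map_sum] at h2
    have h3 : ∀ j ∈ s, (LinearMap.rTensor A (deltaIter K A δ n)) (f j ⊗ₜ[K] B j)
        = deltaIter K A δ n (f j) ⊗ₜ[K] B j := fun _ _ => rfl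
    rw [Finset.sum_congr rfl h3] at h2
    exact kill_right B s _ h2 i hi
  have hterm : ∀ j : ℕ, leftCombMap K A (j + 1) (deltaIter K A δ (j + 1) x)
      = ∑ i ∈ s, leftCombMap K A j (deltaIter K A δ j (f i)) * B i := by
    intro j
    rw [deltaIter_back K δ j x, hsf, map_sum, map_sum, map_sum]
    refine Finset.sum_congr rfl fun i hi => ?_
    have h4 : (LinearMap.rTensor A (deltaIter K A δ j)) (f i ⊗ₜ[K] B i)
        = deltaIter K A δ j (f i) ⊗ₜ[K] B i := rfl
    rw [h4, leftCombMap_shiftIso K j _ (B i)]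
  have hFsum : ∀ i ∈ s, e (f i)
      = ∑ j ∈ Finset.range (N₀ + 1),
          ((-1 : K) ^ j) • leftCombMap K A j (deltaIter K A δ j (f i)) := by
    intro i hi
    rw [he (f i) (N₀ + 1) (fun n hn => hfi n hn i hi), Nat.add_sub_cancel,
      Finset.sum_range_succ'
        (fun j => ((-1 : K) ^ j) • leftCombMap K A j (deltaIter K A δ j (f i))) N₀]
    have h0 : ((-1 : K) ^ 0) • leftCombMap K A 0 (deltaIter K A δ 0 (f i)) = f i := by
      rw [pow_zero, one_smul]; rfl
    rw [h0, sum_Icc_one_eq]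
    exact add_comm _ _
  have hLHS : TensorProduct.lift (LinearMap.mul K A) (LinearMap.rTensor A e (δ x))
      = ∑ i ∈ s, e (f i) * B i := by
    rw [hsf, map_sum, map_sum]
    exact Finset.sum_congr rfl fun i _ => rfl
  have hex := he x (N₀ + 2) hvan
  have h21 : N₀ + 2 - 1 = N₀ + 1 := by omega
  rw [h21, sum_Icc_one_eq] at hex
  have hstep : ∀ j ∈ Finset.range (N₀ + 1),
      ((-1 : K) ^ (j + 1)) • leftCombMap K A (j + 1) (deltaIter K A δ (j + 1) x)
      = -(∑ i ∈ s,
          (((-1 : K) ^ j) • leftCombMap K A j (deltaIter K A δ j (f i))) * B i) := by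
    intro j _
    rw [hterm j, pow_succ, mul_smul, neg_one_smul, smul_neg, Finset.smul_sum]
    congr 1
    exact Finset.sum_congr rfl fun i _ => (smul_mul_assoc _ _ _).symm
  rw [Finset.sum_congr rfl hstep] at hex
  rw [Finset.sum_neg_distrib, Finset.sum_comm] at hex
  have hcomb : ∀ i ∈ s,
      (∑ j ∈ Finset.range (N₀ + 1),
        (((-1 : K) ^ j) • leftCombMap K A j (deltaIter K A δ j (f i))) * B i)
      = e (f i) * B i := by
    intro i hi
    rw [← Finset.sum_mul, ← hFsum i hi]
  rw [Finset.sum_congr rfl hcomb] at hex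
  rw [hLHS, hex]
  abel

lemma delta_e (hui : IsUICoproduct K A δ) (hco : IsCoassoc K A δ)
    (hconil : ConilHyp K A δ) (he : HeHyp K A δ e) : ∀ x : A, δ (e x) = 0 := by
  classical
  set B := Module.Basis.ofVectorSpace K A with hBdef
  -- the auxiliary map Ψ
  set Ψ : A ⊗[K] (A ⊗[K] A) →ₗ[K] A ⊗[K] A :=
    (TensorProduct.map (TensorProduct.lift (LinearMap.mul K A) ∘ₗ LinearMap.rTensor A e)
        LinearMap.id) ∘ₗ (TensorProduct.assoc K A A A).symm.toLinearMap with hΨ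
  have hΨ₁ : ∀ (a : A) (u : A ⊗[K] A),
      Ψ (a ⊗ₜ[K] u) = TensorProduct.map (LinearMap.mulLeft K (e a)) LinearMap.id u := by
    intro a u
    induction u with
    | zero => simp
    | add u₁ u₂ h₁ h₂ => rw [TensorProduct.tmul_add, map_add, h₁, h₂, map_add]
    | tmul c₁ c₂ =>
      rw [hΨ]
      simp only [LinearMap.comp_apply, LinearEquiv.coe_coe, TensorProduct.assoc_symm_tmul,
        TensorProduct.map_tmul, LinearMap.rTensor_tmul, TensorProduct.lift.tmul,
        LinearMap.mul_apply', LinearMap.id_apply, LinearMap.mulLeft_apply]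
  have hΨ₂ : ∀ (u : A ⊗[K] A) (c : A),
      Ψ ((TensorProduct.assoc K A A A) (u ⊗ₜ[K] c))
        = (TensorProduct.lift (LinearMap.mul K A) (LinearMap.rTensor A e u)) ⊗ₜ[K] c := by
    intro u c
    induction u with
    | zero => simp
    | add u₁ u₂ h₁ h₂ =>
      rw [TensorProduct.add_tmul, map_add, map_add, h₁, h₂, map_add, map_add,
        TensorProduct.add_tmul]
    | tmul p q =>
      rw [TensorProduct.assoc_tmul, hΨ]
      simp only [LinearMap.comp_apply, LinearEquiv.coe_coe, TensorProduct.assoc_symm_tmul,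
        TensorProduct.map_tmul, LinearMap.rTensor_tmul, TensorProduct.lift.tmul,
        LinearMap.mul_apply', LinearMap.id_apply]
  have main : ∀ (N : ℕ) (x : A), (∀ n, N ≤ n → deltaIter K A δ n x = 0) → δ (e x) = 0 := by
    intro N
    induction N with
    | zero =>
      intro x hx
      have h0 : x = 0 := hx 0 le_rfl
      rw [h0, map_zero, map_zero]
    | succ N ih =>
      intro x hx
      rcases Nat.eq_zero_or_pos N with rfl | hN
      · have hδx : δ x = 0 := hx 1 le_rfl
        rw [e_fix K δ e he hδx]
        exact hδx
      · obtain ⟨s, f, hsf⟩ := exists_decomp_right (δ x)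
        have hfi : ∀ n, N ≤ n → ∀ i ∈ s, deltaIter K A δ n (f i) = 0 := by
          intro n hn i hi
          have h1 : deltaIter K A δ (n + 1) x = 0 := hx (n + 1) (by omega)
          rw [deltaIter_back K δ n x] at h1
          have h2 : LinearMap.rTensor A (deltaIter K A δ n) (δ x) = 0 :=
            (LinearEquiv.map_eq_zero_iff (shiftIso K A n)).mp h1
          rw [hsf, map_sum] at h2
          have h3 : ∀ j ∈ s, (LinearMap.rTensor A (deltaIter K A δ n)) (f j ⊗ₜ[K] B j)
              = deltaIter K A δ n (f j) ⊗ₜ[K] B j := fun _ _ => rfl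
          rw [Finset.sum_congr rfl h3] at h2
          exact kill_right B s _ h2 i hi
        have hie : ∀ i ∈ s, δ (e (f i)) = 0 := fun i hi =>
          ih (f i) (fun n hn => hfi n hn i hi)
        have hex : e x = x - ∑ i ∈ s, e (f i) * B i := by
          have h6 := e_recursion K δ e hconil he x
          have h7 : TensorProduct.lift (LinearMap.mul K A) (LinearMap.rTensor A e (δ x))
              = ∑ i ∈ s, e (f i) * B i := by
            rw [hsf, map_sum, map_sum]
            exact Finset.sum_congr rfl fun i _ => rfl
          rw [h7] at h6
          rw [h6]
          abel
        have hterm : ∀ i ∈ s, δ (e (f i) * B i)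
            = TensorProduct.map (LinearMap.mulLeft K (e (f i))) LinearMap.id (δ (B i))
              + e (f i) ⊗ₜ[K] B i := by
          intro i hi
          rw [hui (e (f i)) (B i), hie i hi, map_zero, zero_add]
        have hkey : ∑ i ∈ s,
            TensorProduct.map (LinearMap.mulLeft K (e (f i))) LinearMap.id (δ (B i))
            = ∑ i ∈ s, (f i - e (f i)) ⊗ₜ[K] B i := by
          have k1 : ∑ i ∈ s,
              TensorProduct.map (LinearMap.mulLeft K (e (f i))) LinearMap.id (δ (B i))
              = Ψ (LinearMap.lTensor A δ (δ x)) := by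
            rw [hsf, map_sum, map_sum]
            refine Finset.sum_congr rfl fun i hi => ?_
            have h8 : (LinearMap.lTensor A δ) (f i ⊗ₜ[K] B i) = f i ⊗ₜ[K] δ (B i) := rfl
            rw [h8, hΨ₁]
          have k2 : LinearMap.lTensor A δ (δ x)
              = (TensorProduct.assoc K A A A) (LinearMap.rTensor A δ (δ x)) := by
            have := hco x
            have hr : LinearMap.rTensor A δ (δ x)
                = TensorProduct.map δ LinearMap.id (δ x) := rfl
            have hl : LinearMap.lTensor A δ (δ x)
                = TensorProduct.map LinearMap.id δ (δ x) := rfl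
            rw [hr, hl, this]
          have k3 : Ψ ((TensorProduct.assoc K A A A) (LinearMap.rTensor A δ (δ x)))
              = ∑ i ∈ s, (f i - e (f i)) ⊗ₜ[K] B i := by
            rw [hsf, map_sum, map_sum, map_sum]
            refine Finset.sum_congr rfl fun i hi => ?_
            have h9 : (LinearMap.rTensor A δ) (f i ⊗ₜ[K] B i) = δ (f i) ⊗ₜ[K] B i := rfl
            rw [h9, hΨ₂, e_recursion K δ e hconil he (f i)]
          rw [k1, k2, k3]
        rw [hex, map_sub, map_sum]
        rw [Finset.sum_congr rfl hterm, Finset.sum_add_distrib, hkey,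
          ← Finset.sum_add_distrib]
        have h10 : ∀ i ∈ s, (f i - e (f i)) ⊗ₜ[K] B i + e (f i) ⊗ₜ[K] B i
            = f i ⊗ₜ[K] B i := by
          intro i hi
          rw [TensorProduct.sub_tmul]
          abel
        rw [Finset.sum_congr rfl h10, ← hsf]
        abel
  intro x
  obtain ⟨N, hN⟩ := hconil x
  exact main N x hN

lemma reconstruction (hco : IsCoassoc K A δ) (hconil : ConilHyp K A δ)
    (he : HeHyp K A δ e) :
    ∀ (N : ℕ) (x : A), (∀ n, N ≤ n → deltaIter K A δ n x = 0) →
      ∑ n ∈ Finset.range N,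
        rightCombMap K A n (tensorPowMap K A e n (deltaIter K A δ n x)) = x := by
  classical
  set B := Module.Basis.ofVectorSpace K A with hBdef
  intro N
  induction N with
  | zero =>
    intro x hx
    have h0 : x = 0 := hx 0 le_rfl
    rw [h0]
    simp
  | succ N ih =>
    intro x hx
    obtain ⟨s, f, hsf⟩ := exists_decomp_left (δ x)
    have hfi : ∀ n, N ≤ n → ∀ i ∈ s, deltaIter K A δ n (f i) = 0 := by
      intro n hn i hi
      have h1 : deltaIter K A δ (n + 1) x = 0 := hx (n + 1) (by omega)
      rw [deltaIter_succ_eq_lTensor K δ hco n x, hsf, map_sum] at h1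
      have h3 : ∀ j ∈ s, (LinearMap.lTensor A (deltaIter K A δ n)) (B j ⊗ₜ[K] f j)
          = B j ⊗ₜ[K] deltaIter K A δ n (f j) := fun _ _ => rfl
      rw [Finset.sum_congr rfl h3] at h1
      exact kill_left B s _ h1 i hi
    rw [Finset.sum_range_succ'
      (fun n => rightCombMap K A n (tensorPowMap K A e n (deltaIter K A δ n x))) N]
    have hzero : rightCombMap K A 0 (tensorPowMap K A e 0 (deltaIter K A δ 0 x))
        = e x := rfl
    have hsucc : ∀ n : ℕ,
        rightCombMap K A (n + 1) (tensorPowMap K A e (n + 1) (deltaIter K A δ (n + 1) x))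
        = ∑ i ∈ s,
            e (B i) * rightCombMap K A n (tensorPowMap K A e n (deltaIter K A δ n (f i))) := by
      intro n
      erw [deltaIter_succ_eq_lTensor K δ hco n x, hsf, map_sum, map_sum, map_sum]
      exact Finset.sum_congr rfl fun i hi => rfl
    rw [hzero, Finset.sum_congr rfl (fun n _ => hsucc n), Finset.sum_comm]
    have hinner : ∀ i ∈ s,
        (∑ n ∈ Finset.range N,
          e (B i) * rightCombMap K A n (tensorPowMap K A e n (deltaIter K A δ n (f i))))
        = e (B i) * f i := by
      intro i hi
      rw [← Finset.mul_sum, ih (f i) (fun n hn => hfi n hn i hi)]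
    rw [Finset.sum_congr rfl hinner]
    have hmul : ∑ i ∈ s, e (B i) * f i
        = TensorProduct.lift (LinearMap.mul K A) (LinearMap.rTensor A e (δ x)) := by
      rw [hsf, map_sum, map_sum]
      exact Finset.sum_congr rfl fun i _ => rfl
    rw [hmul, e_recursion K δ e hconil he x]
    abel

lemma tensorPowMap_mem (hde : ∀ x : A, δ (e x) = 0) :
    ∀ (n : ℕ) (w : Tpow K A n), tensorPowMap K A e n w ∈ primPow K A δ n := by
  intro n
  induction n with
  | zero => exact fun w => LinearMap.mem_ker.mpr (hde w)
  | succ n ih =>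
    intro w
    revert w
    change ∀ w : A ⊗[K] Tpow K A n, _
    intro w
    refine TensorProduct.induction_on (R := K) (M := A) (N := Tpow K A n) w
      ?_ (fun a v => ?_) (fun w₁ w₂ h₁ h₂ => ?_)
    · erw [map_zero]; exact Submodule.zero_mem _
    · have h : tensorPowMap K A e (n + 1) (a ⊗ₜ[K] v)
          = e a ⊗ₜ[K] tensorPowMap K A e n v := rfl
      erw [h]
      exact ⟨(⟨e a, LinearMap.mem_ker.mpr (hde a)⟩ : LinearMap.ker δ)
        ⊗ₜ[K] (⟨tensorPowMap K A e n v, ih v⟩ : primPow K A δ n), rfl⟩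
    · erw [map_add]; exact Submodule.add_mem _ h₁ h₂

lemma tensorPowMap_fix (hfix : ∀ x : A, δ x = 0 → e x = x) :
    ∀ (n : ℕ) (w : Tpow K A n), w ∈ primPow K A δ n → tensorPowMap K A e n w = w := by
  intro n
  induction n with
  | zero => exact fun w hw => hfix w (LinearMap.mem_ker.mp hw)
  | succ n ih =>
    intro w hw
    have hw' : w ∈ LinearMap.range
        (TensorProduct.mapIncl (LinearMap.ker δ) (primPow K A δ n)) := hw
    obtain ⟨z, rfl⟩ := hw'
    clear hw
    induction z with
    | zero => erw [map_zero]
    | tmul p q =>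
      have h1 : (TensorProduct.mapIncl (LinearMap.ker δ) (primPow K A δ n)) (p ⊗ₜ[K] q)
          = (p : A) ⊗ₜ[K] (q : Tpow K A n) := rfl
      rw [h1]
      have h2 : tensorPowMap K A e (n + 1) ((p : A) ⊗ₜ[K] (q : Tpow K A n))
          = e (p : A) ⊗ₜ[K] tensorPowMap K A e n (q : Tpow K A n) := rfl
      erw [h2, hfix (p : A) (LinearMap.mem_ker.mp p.2), ih (q : Tpow K A n) q.2]
    | add z₁ z₂ h₁ h₂ => erw [map_add, map_add, h₁, h₂]; exact rfl

lemma exists_preimage (hui : IsUICoproduct K A δ) :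
    ∀ (n : ℕ) (p : Tpow K A n), p ∈ primPow K A δ n →
      ∃ x : A, deltaIter K A δ n x = p ∧ ∀ k, n < k → deltaIter K A δ k x = 0 := by
  intro n
  induction n with
  | zero =>
    intro p hp
    refine ⟨p, rfl, ?_⟩
    intro k hk
    obtain ⟨k', rfl⟩ : ∃ k', k = k' + 1 := ⟨k - 1, by omega⟩
    exact deltaIter_eq_zero_of_le K δ le_rfl
      (LinearMap.mem_ker.mp hp) (k' + 1) (by omega)
  | succ n ih =>
    intro p hp
    have hp' : p ∈ LinearMap.range
        (TensorProduct.mapIncl (LinearMap.ker δ) (primPow K A δ n)) := hp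
    obtain ⟨z, rfl⟩ := hp'
    clear hp
    induction z with
    | zero => exact ⟨0, by simp; exact rfl, fun k hk => by simp⟩
    | add z₁ z₂ h₁ h₂ =>
      obtain ⟨x₁, hx₁, hk₁⟩ := h₁
      obtain ⟨x₂, hx₂, hk₂⟩ := h₂
      exact ⟨x₁ + x₂, by rw [map_add, map_add, hx₁, hx₂]; exact rfl,
        fun k hk => by rw [map_add, hk₁ k hk, hk₂ k hk, add_zero]⟩
    | tmul a q =>
      obtain ⟨y, hy, hky⟩ := ih (q : Tpow K A n) q.2
      have ha : δ (a : A) = 0 := LinearMap.mem_ker.mp a.2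
      refine ⟨(a : A) * y, ?_, ?_⟩
      · erw [deltaIter_mul_prim K δ hui ha y n, hky (n + 1) (by omega), map_zero,
          zero_add, hy]
        rfl
      · intro k hk
        obtain ⟨k', rfl⟩ : ∃ k', k = k' + 1 := ⟨k - 1, by omega⟩
        erw [deltaIter_mul_prim K δ hui ha y k', hky (k' + 1) (by omega), map_zero,
          zero_add, hky k' (by omega), TensorProduct.tmul_zero]
        exact rfl

end ELemmas

end MoreAux

end Aux

/-- For a conilpotent bialgebra, the map `α : A → ⨁_{n≥0} A^{⊗(n+1)}` whose `n`-th
component is `e^{⊗(n+1)} ∘ δⁿ` is injective with image `⨁_{n≥0} (Prim A)^{⊗(n+1)}`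
(indices shifted: the component in `A^{⊗m}` for `m ≥ 1` is indexed here by
`n = m - 1`). -/
theorem alpha_injective_range_primPow
    (δ : A →ₗ[K] A ⊗[K] A) (hui : IsUICoproduct K A δ) (hco : IsCoassoc K A δ)
    (hconil : ∀ x : A, ∃ N : ℕ, ∀ n, N ≤ n → deltaIter K A δ n x = 0)
    (e : A →ₗ[K] A)
    (he : ∀ (x : A) (N : ℕ), (∀ n, N ≤ n → deltaIter K A δ n x = 0) →
      e x = x + ∑ k ∈ Finset.Icc 1 (N - 1),
        ((-1 : K) ^ k) • leftCombMap K A k (deltaIter K A δ k x))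
    (α : A →ₗ[K] (⨁ (n : ℕ), Tpow K A n))
    (hα : ∀ (x : A) (n : ℕ),
      (α x) n = tensorPowMap K A e n (deltaIter K A δ n x)) :
    Function.Injective α ∧
      LinearMap.range α =
        ⨆ (n : ℕ), (primPow K A δ n).map (DirectSum.lof K ℕ (fun n => Tpow K A n) n) := by
  classical
  have hHe : HeHyp K A δ e := he
  have hCon : ConilHyp K A δ := hconil
  have hde : ∀ x : A, δ (e x) = 0 := delta_e K δ e hui hco hCon hHe
  have hfix : ∀ x : A, δ x = 0 → e x = x := fun x hx => e_fix K δ e hHe hx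
  constructor
  · rw [injective_iff_map_eq_zero]
    intro x hx0
    have hcomp : ∀ n, tensorPowMap K A e n (deltaIter K A δ n x) = 0 := by
      intro n
      rw [← hα x n, hx0]
      rfl
    obtain ⟨N, hN⟩ := hconil x
    have hrec := reconstruction K δ e hco hCon hHe N x hN
    rw [← hrec]
    refine Finset.sum_eq_zero fun n _ => ?_
    rw [hcomp n, map_zero]
  · have surj : ∀ n : ℕ, ∀ p ∈ primPow K A δ n,
        (DirectSum.lof K ℕ (fun m => Tpow K A m) n) p ∈ LinearMap.range α := by
      intro n
      induction n using Nat.strong_induction_on with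
      | _ n IH =>
        intro p hp
        obtain ⟨x, hx1, hx2⟩ := exists_preimage K δ hui n p hp
        have hdecomp : α x = (DirectSum.lof K ℕ (fun m => Tpow K A m) n) p
            + ∑ k ∈ Finset.range n, (DirectSum.lof K ℕ (fun m => Tpow K A m) k)
                (tensorPowMap K A e k (deltaIter K A δ k x)) := by
          refine DFinsupp.ext fun m => ?_
          rw [DirectSum.add_apply, DFinsupp.finset_sum_apply]
          rcases lt_trichotomy m n with hlt | rfl | hgt
          · -- m < n
            rw [hα x m]
            rw [DirectSum.lof_eq_of, DirectSum.of_eq_of_ne _ _ _ (by omega), zero_add]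
            rw [Finset.sum_eq_single m
              (fun k _ hk => by
                rw [DirectSum.lof_eq_of, DirectSum.of_eq_of_ne _ _ _ hk.symm])
              (fun hm => absurd (Finset.mem_range.mpr hlt) hm)]
            rw [DirectSum.lof_eq_of]
            exact (DirectSum.of_eq_same m _).symm
          · -- m = n
            rw [hα x m, hx1, tensorPowMap_fix K δ e hfix m p hp]
            rw [DirectSum.lof_apply]
            rw [Finset.sum_eq_zero
              (fun k hk => by
                rw [DirectSum.lof_eq_of,
                  DirectSum.of_eq_of_ne _ _ _ (by have := Finset.mem_range.mp hk; omega)]),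
              add_zero]
          · -- n < m
            rw [hα x m, hx2 m hgt, map_zero]
            rw [DirectSum.lof_eq_of, DirectSum.of_eq_of_ne _ _ _ (by omega), zero_add]
            rw [Finset.sum_eq_zero
              (fun k hk => by
                rw [DirectSum.lof_eq_of,
                  DirectSum.of_eq_of_ne _ _ _ (by have := Finset.mem_range.mp hk; omega)])]
        have h' : (DirectSum.lof K ℕ (fun m => Tpow K A m) n) p
            = α x - ∑ k ∈ Finset.range n, (DirectSum.lof K ℕ (fun m => Tpow K A m) k)
                (tensorPowMap K A e k (deltaIter K A δ k x)) := by
          rw [hdecomp]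
          abel
        rw [h']
        refine Submodule.sub_mem _ (LinearMap.mem_range_self α x)
          (Submodule.sum_mem _ fun k hk => ?_)
        exact IH k (Finset.mem_range.mp hk) _ (tensorPowMap_mem K δ e hde k _)
    apply le_antisymm
    · rintro _ ⟨x, rfl⟩
      rw [← DirectSum.sum_support_of (α x)]
      refine Submodule.sum_mem _ fun n hn => ?_
      have hmem : (α x) n ∈ primPow K A δ n := by
        rw [hα x n]
        exact tensorPowMap_mem K δ e hde n _
      have hof : (DirectSum.of (fun m => Tpow K A m) n) ((α x) n)
          = (DirectSum.lof K ℕ (fun m => Tpow K A m) n) ((α x) n) :=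
        (DirectSum.lof_eq_of K ℕ (fun m => Tpow K A m) n _).symm
      rw [hof]
      exact le_iSup (fun n => (primPow K A δ n).map
        (DirectSum.lof K ℕ (fun m => Tpow K A m) n)) n
        (Submodule.mem_map_of_mem hmem)
    · refine iSup_le fun n => ?_
      rw [Submodule.map_le_iff_le_comap]
      intro p hp
      exact surj n p hp
end
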